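/- arXiv:2304.13466 — 6 statements merged into one kernel-verified Lean document; each statement's English description precedes it below -/
import Mathlib

section
/- Let p_0 = p_0(t) = 2/(√(4t+9) − 1). For 0 < p < 1 and n ≥ t+3, one has μ_p(F_1^t) < μ_p(F_0^t) if and only if 0 < p < p_0, and μ_p(F_1^t) = μ_p(F_0^t) if and only if p = p_0. -/
open Finset

/-- p-biased measure of a family on ground set of size `n` (= `[n]`). -/
def mu (p : ℝ) (n : ℕ) (G : Finset (Finset ℕ)) : ℝ :=
  ∑ A ∈ G, p ^ A.card * (1 - p) ^ (n - A.card)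

/-- p-biased measure of a family on an arbitrary finite ground set `X`. -/
def muOn (p : ℝ) (X : Finset ℕ) (G : Finset (Finset ℕ)) : ℝ :=
  ∑ A ∈ G, p ^ A.card * (1 - p) ^ (X.card - A.card)

/-- `F_0^t = {F ⊆ [n] : [t] ⊆ F}`. -/
def F0 (n t : ℕ) : Finset (Finset ℕ) :=
  (Finset.Icc 1 n).powerset.filter (fun F => Finset.Icc 1 t ⊆ F)

/-- `F_1^t = {F ⊆ [n] : |F ∩ [t+3]| ≥ t+2}`. -/
def F1 (n t : ℕ) : Finset (Finset ℕ) :=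
  (Finset.Icc 1 n).powerset.filter (fun F => t + 2 ≤ (F ∩ Finset.Icc 1 (t + 3)).card)

/-- `F_2^t = {F ⊆ [n] : |F ∩ [t+6]| ≥ t+4}`. -/
def F2 (n t : ℕ) : Finset (Finset ℕ) :=
  (Finset.Icc 1 n).powerset.filter (fun F => t + 4 ≤ (F ∩ Finset.Icc 1 (t + 6)).card)

/-- `p_0(t) = 2/(√(4t+9) − 1)`. -/
noncomputable def p0 (t : ℕ) : ℝ := 2 / (Real.sqrt (4 * t + 9) - 1)

/-- The family is `r`-wise `t`-intersecting: any `r` members (with repetition)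
intersect in at least `t` elements. -/
def RWise (r t : ℕ) (G : Finset (Finset ℕ)) : Prop :=
  ∀ f : Fin r → Finset ℕ, (∀ k, f k ∈ G) → t ≤ (⋂ k, (f k : Set ℕ)).ncard

/-- The shift `s_{i,j}` of a single set `A`, relative to the family `G`. -/
def shiftSet (i j : ℕ) (G : Finset (Finset ℕ)) (A : Finset ℕ) : Finset ℕ :=
  if A ∩ {i, j} = {j} ∧ (A.erase j ∪ {i}) ∉ G then A.erase j ∪ {i} else A

/-- The shifting operation `σ_{i,j}` applied to a family. -/
def shift (i j : ℕ) (G : Finset (Finset ℕ)) : Finset (Finset ℕ) :=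
  G.image (shiftSet i j G)

/-- `G` and `H` are isomorphic as families on ground set `[n]`:
`H` is the image of `G` under a permutation preserving `[n]`. -/
def Iso (n : ℕ) (G H : Finset (Finset ℕ)) : Prop :=
  ∃ τ : Equiv.Perm ℕ, (∀ x, x ∈ Finset.Icc 1 n ↔ τ x ∈ Finset.Icc 1 n) ∧
    H = G.image (fun A => A.image τ)

/-- `G` is `(3,t)`-maximal on `[n]`. -/
def Max3 (n t : ℕ) (G : Finset (Finset ℕ)) : Prop :=
  (∀ A ∈ G, A ⊆ Finset.Icc 1 n) ∧ RWise 3 t G ∧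
    ∀ F : Finset ℕ, F ⊆ Finset.Icc 1 n → F ∉ G → ¬ RWise 3 t (insert F G)

/-- `G` is shifted on `[n]`. -/
def Shifted (n : ℕ) (G : Finset (Finset ℕ)) : Prop :=
  ∀ i j : ℕ, 1 ≤ i → i < j → j ≤ n → shift i j G = G

/-- One shifting step. -/
def ShiftStep (n : ℕ) (G H : Finset (Finset ℕ)) : Prop :=
  ∃ i j : ℕ, 1 ≤ i ∧ i ≤ n ∧ 1 ≤ j ∧ j ≤ n ∧ H = shift i j G

lemma sum_powerset_one (p : ℝ) (X : Finset ℕ) :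
    ∑ S ∈ X.powerset, p ^ S.card * (1 - p) ^ (X.card - S.card) = 1 := by
  have h := Finset.prod_add (fun _ : ℕ => p) (fun _ : ℕ => 1 - p) X
  simp only [Finset.prod_const] at h
  have h2 : ∀ S ∈ X.powerset, p ^ S.card * (1 - p) ^ (X.card - S.card)
      = p ^ S.card * (1 - p) ^ ((X \ S).card) := by
    intro S hS
    rw [Finset.card_sdiff_of_subset (Finset.mem_powerset.mp hS)]
  rw [Finset.sum_congr rfl h2, ← h]
  norm_num

lemma mu_split (p : ℝ) (m n : ℕ) (hmn : m ≤ n) (P : Finset ℕ → Prop) [DecidablePred P]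
    (hP : ∀ F, P F ↔ P (F ∩ Finset.Icc 1 m)) :
    mu p n ((Finset.Icc 1 n).powerset.filter P)
      = ∑ B ∈ (Finset.Icc 1 m).powerset.filter P, p ^ B.card * (1 - p) ^ (m - B.card) := by
  classical
  set T : Finset ℕ := Finset.Icc 1 m with hT
  set R : Finset ℕ := Finset.Icc (m+1) n with hR
  have hdisj : Disjoint T R := by
    rw [Finset.disjoint_left]
    intro a ha hb
    simp only [hT, hR, Finset.mem_Icc] at ha hb
    omega
  have hunion : T ∪ R = Finset.Icc 1 n := by
    ext a
    simp only [hT, hR, Finset.mem_union, Finset.mem_Icc]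
    omega
  have hTcard : T.card = m := by simp [hT]
  have hRcard : R.card = n - m := by rw [hR, Nat.card_Icc]; omega
  have hint1 : ∀ B S : Finset ℕ, B ⊆ T → S ⊆ R → (B ∪ S) ∩ T = B := by
    intro B S hB hS
    ext a
    simp only [Finset.mem_inter, Finset.mem_union]
    constructor
    · rintro ⟨h | h, haT⟩
      · exact h
      · exact absurd haT (Finset.disjoint_right.mp hdisj (hS h))
    · intro h; exact ⟨Or.inl h, hB h⟩
  have hint2 : ∀ B S : Finset ℕ, B ⊆ T → S ⊆ R → (B ∪ S) ∩ R = S := by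
    intro B S hB hS
    ext a
    simp only [Finset.mem_inter, Finset.mem_union]
    constructor
    · rintro ⟨h | h, haR⟩
      · exact absurd haR (Finset.disjoint_left.mp hdisj (hB h))
      · exact h
    · intro h; exact ⟨Or.inr h, hS h⟩
  have key : mu p n ((Finset.Icc 1 n).powerset.filter P)
      = ∑ x ∈ (T.powerset.filter P) ×ˢ R.powerset,
          (p ^ x.1.card * (1 - p) ^ (m - x.1.card)) *
          (p ^ x.2.card * (1 - p) ^ ((n - m) - x.2.card)) := by
    unfold mu
    apply Finset.sum_nbij' (fun F => (F ∩ T, F ∩ R)) (fun x => x.1 ∪ x.2)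
    · intro F hF
      simp only [Finset.mem_filter, Finset.mem_powerset] at hF
      simp only [Finset.mem_product, Finset.mem_filter, Finset.mem_powerset]
      exact ⟨⟨Finset.inter_subset_right, (hP F).mp hF.2⟩, Finset.inter_subset_right⟩
    · intro x hx
      simp only [Finset.mem_product, Finset.mem_filter, Finset.mem_powerset] at hx
      simp only [Finset.mem_filter, Finset.mem_powerset]
      have hsub : x.1 ∪ x.2 ⊆ Finset.Icc 1 n := by
        rw [← hunion]; exact Finset.union_subset_union hx.1.1 hx.2
      refine ⟨hsub, ?_⟩
      rw [hP, hint1 x.1 x.2 hx.1.1 hx.2]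
      exact hx.1.2
    · intro F hF
      simp only [Finset.mem_filter, Finset.mem_powerset] at hF
      rw [← Finset.inter_union_distrib_left, hunion]
      exact Finset.inter_eq_left.mpr hF.1
    · intro x hx
      simp only [Finset.mem_product, Finset.mem_filter, Finset.mem_powerset] at hx
      rw [hint1 x.1 x.2 hx.1.1 hx.2, hint2 x.1 x.2 hx.1.1 hx.2]
    · intro F hF
      simp only [Finset.mem_filter, Finset.mem_powerset] at hF
      have hcard : F.card = (F ∩ T).card + (F ∩ R).card := by
        rw [← Finset.card_union_of_disjoint
          (hdisj.mono Finset.inter_subset_right Finset.inter_subset_right),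
          ← Finset.inter_union_distrib_left, hunion, Finset.inter_eq_left.mpr hF.1]
      have ha : (F ∩ T).card ≤ m := hTcard ▸ Finset.card_le_card Finset.inter_subset_right
      have hb : (F ∩ R).card ≤ n - m := hRcard ▸ Finset.card_le_card Finset.inter_subset_right
      have hexp : n - ((F ∩ T).card + (F ∩ R).card)
          = (m - (F ∩ T).card) + ((n - m) - (F ∩ R).card) := by omega
      dsimp only
      rw [hcard, hexp, pow_add, pow_add]
      ring
  rw [key, Finset.sum_product]
  apply Finset.sum_congr rfl
  intro B hB
  dsimp only
  rw [← Finset.mul_sum, ← hRcard, sum_powerset_one, mul_one]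

lemma mu_F0 (p : ℝ) (n t : ℕ) (htn : t ≤ n) : mu p n (F0 n t) = p ^ t := by
  have h := mu_split p t n htn (fun F => Finset.Icc 1 t ⊆ F)
    (fun F => ⟨fun h => Finset.subset_inter h Finset.Subset.rfl,
      fun h => h.trans Finset.inter_subset_left⟩)
  rw [F0, h]
  have : (Finset.Icc 1 t).powerset.filter (fun B => Finset.Icc 1 t ⊆ B) = {Finset.Icc 1 t} := by
    ext B
    simp only [Finset.mem_filter, Finset.mem_powerset, Finset.mem_singleton]
    constructor
    · rintro ⟨h1, h2⟩; exact Finset.Subset.antisymm h1 h2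
    · rintro rfl; exact ⟨Finset.Subset.rfl, Finset.Subset.rfl⟩
  rw [this, Finset.sum_singleton]
  simp

lemma mu_F1 (p : ℝ) (n t : ℕ) (htn : t + 3 ≤ n) :
    mu p n (F1 n t) = p ^ (t+3) + (t+3 : ℝ) * p ^ (t+2) * (1 - p) := by
  have h := mu_split p (t+3) n htn (fun F => t + 2 ≤ (F ∩ Finset.Icc 1 (t+3)).card)
    (fun F => by simp only [Finset.inter_assoc, Finset.inter_self])
  rw [F1, h]
  have hsplit : (Finset.Icc 1 (t+3)).powerset.filter
        (fun B => t + 2 ≤ (B ∩ Finset.Icc 1 (t+3)).card)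
      = (Finset.Icc 1 (t+3)).powersetCard (t+3) ∪ (Finset.Icc 1 (t+3)).powersetCard (t+2) := by
    ext B
    simp only [Finset.mem_filter, Finset.mem_powerset, Finset.mem_union, Finset.mem_powersetCard]
    constructor
    · rintro ⟨h1, h2⟩
      rw [Finset.inter_eq_left.mpr h1] at h2
      have hle := Finset.card_le_card h1
      rw [Nat.card_Icc] at hle
      have : B.card = t + 3 ∨ B.card = t + 2 := by omega
      rcases this with h | h
      · exact Or.inl ⟨h1, h⟩
      · exact Or.inr ⟨h1, h⟩
    · rintro (⟨h1, h2⟩ | ⟨h1, h2⟩) <;>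
        · rw [Finset.inter_eq_left.mpr h1]; exact ⟨h1, by omega⟩
  rw [hsplit, Finset.sum_union]
  · have e1 : ∀ B ∈ (Finset.Icc 1 (t+3)).powersetCard (t+3),
        p ^ B.card * (1 - p) ^ (t + 3 - B.card) = p ^ (t+3) * (1 - p) ^ 0 := by
      intro B hB
      rw [(Finset.mem_powersetCard.mp hB).2, Nat.sub_self]
    have e2 : ∀ B ∈ (Finset.Icc 1 (t+3)).powersetCard (t+2),
        p ^ B.card * (1 - p) ^ (t + 3 - B.card) = p ^ (t+2) * (1 - p) ^ 1 := by
      intro B hB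
      rw [(Finset.mem_powersetCard.mp hB).2, show t + 3 - (t+2) = 1 from by omega]
    rw [Finset.sum_congr rfl e1, Finset.sum_congr rfl e2, Finset.sum_const, Finset.sum_const,
      Finset.card_powersetCard, Finset.card_powersetCard, Nat.card_Icc]
    have hc1 : (t + 3 + 1 - 1).choose (t+3) = 1 := by
      rw [show t + 3 + 1 - 1 = t + 3 from by omega, Nat.choose_self]
    have hc2 : (t + 3 + 1 - 1).choose (t+2) = t + 3 := by
      rw [show t + 3 + 1 - 1 = t + 3 from by omega]
      have h := Nat.choose_symm (n := t+3) (k := 1) (by omega)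
      simp only [Nat.choose_one_right] at h
      rw [show t + 3 - 1 = t + 2 from by omega] at h
      omega
    rw [hc1, hc2]
    simp only [nsmul_eq_mul]
    push_cast
    ring
  · rw [Finset.disjoint_left]
    intro B h1 h2
    rw [Finset.mem_powersetCard] at h1 h2
    omega

theorem stmt_2 (n t : ℕ) (ht : 1 ≤ t) (hn : t + 3 ≤ n) (p : ℝ) (hp : 0 < p) (hp1 : p < 1) :
    (mu p n (F1 n t) < mu p n (F0 n t) ↔ p < p0 t) ∧
    (mu p n (F1 n t) = mu p n (F0 n t) ↔ p = p0 t) := by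
  have hmu0 : mu p n (F0 n t) = p ^ t := mu_F0 p n t (by omega)
  have hmu1 := mu_F1 p n t hn
  set s : ℝ := Real.sqrt (4 * t + 9) with hs
  have hs2 : s ^ 2 = 4 * t + 9 := Real.sq_sqrt (by positivity)
  have hs0 : 0 ≤ s := Real.sqrt_nonneg _
  have hs3 : 3 ≤ s := by nlinarith [sq_nonneg (s - 3)]
  have hs1 : s - 1 ≠ 0 := by linarith
  have hp0eq : p0 t = (s + 1) / (2 * (t + 2)) := by
    rw [p0, ← hs, div_eq_div_iff (by linarith) (by positivity)]
    linear_combination (-1 : ℝ) * hs2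
  have hq : (t + 2 : ℝ) * (p0 t) ^ 2 - p0 t - 1 = 0 := by
    rw [hp0eq]
    have h2t : (2 * ((t:ℝ) + 2)) ≠ 0 := by positivity
    field_simp
    first
    | linear_combination hs2
    | linear_combination (2 * ((t:ℝ) + 2)) * hs2
    | linear_combination (4 * ((t:ℝ) + 2)) * hs2
    | nlinarith [hs2]
  have hp0pos : 0 < p0 t := by
    rw [p0, ← hs]
    exact div_pos two_pos (by linarith)
  have hp0lt : (t + 2 : ℝ) * p0 t > 1 := by
    rw [p0, ← hs]
    rw [gt_iff_lt, show (t+2:ℝ) * (2 / (s-1)) = 2*(t+2) / (s-1) from by ring,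
      lt_div_iff₀ (by linarith)]
    nlinarith
  have hfac : (t + 2 : ℝ) * p ^ 2 - p - 1 = (p - p0 t) * ((t + 2) * (p + p0 t) - 1) := by
    linear_combination hq
  have hC : 0 < (t + 2 : ℝ) * (p + p0 t) - 1 := by nlinarith
  have key : mu p n (F1 n t) - mu p n (F0 n t)
      = (p - p0 t) * (p ^ t * (1 - p) * ((t + 2) * (p + p0 t) - 1)) := by
    rw [hmu0, hmu1]
    have : p ^ (t+3) + (t+3:ℝ) * p ^ (t+2) * (1 - p) - p ^ t
        = p ^ t * (1 - p) * ((t + 2) * p ^ 2 - p - 1) := by ring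
    rw [this, hfac]
    ring
  set D : ℝ := p ^ t * (1 - p) * ((t + 2) * (p + p0 t) - 1) with hDdef
  have hD : 0 < D := mul_pos (mul_pos (pow_pos hp t) (by linarith)) hC
  have hiff1 : p < p0 t ↔ (p - p0 t) * D < 0 := by
    constructor
    · intro h; exact mul_neg_of_neg_of_pos (by linarith) hD
    · intro h
      by_contra h'
      push_neg at h'
      nlinarith
  have hiff2 : p = p0 t ↔ (p - p0 t) * D = 0 := by
    constructor
    · intro h; rw [h]; ring
    · intro h
      rcases mul_eq_zero.mp h with h' | h'
      · linarith
      · exact absurd h' (ne_of_gt hD)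
  have e1 : mu p n (F1 n t) < mu p n (F0 n t) ↔ (p - p0 t) * D < 0 := by
    rw [← sub_neg, key]
  have e2 : mu p n (F1 n t) = mu p n (F0 n t) ↔ (p - p0 t) * D = 0 := by
    rw [← sub_eq_zero, key]
  exact ⟨e1.trans hiff1.symm, e2.trans hiff2.symm⟩
end

section
/- The quantity max_{0<p≤p_0(t)} μ_p(F_2^t)/μ_p(F_0^t) = C(t+6,2) p_0^4 q_0^2 + (t+6) p_0^5 q_0 + p_0^6 tends to 1/2 as t → ∞, where p_0 = 2/(√(4t+9)−1) and q_0 = 1 − p_0. -/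
open Finset

/-!
`p0 t` is the positive root of `(t + 2) p² = 1 + p`. Eliminating `t` with this relation turns
the ratio into a polynomial in `p0 t` whose constant term is `1 / 2`, and `p0 t → 0`.
-/

open Filter Topology

lemma three_le_sqrt_four_mul_add_nine (t : ℕ) : (3 : ℝ) ≤ √(4 * t + 9) :=
  Real.le_sqrt_of_sq_le (by norm_num)

lemma add_two_mul_p0_sq (t : ℕ) : ((t : ℝ) + 2) * p0 t ^ 2 = 1 + p0 t := by
  have hu := three_le_sqrt_four_mul_add_nine t
  have hu2 : √(4 * (t : ℝ) + 9) ^ 2 = 4 * t + 9 := Real.sq_sqrt (by positivity)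
  rw [p0, div_pow]
  set u := √(4 * (t : ℝ) + 9)
  have hne : u - 1 ≠ 0 := by linarith
  field_simp
  linear_combination -hu2

lemma tendsto_p0_atTop : Tendsto p0 atTop (𝓝 0) := by
  have h : Tendsto (fun t : ℕ => 4 * (t : ℝ) + 9) atTop atTop :=
    tendsto_atTop_add_const_right _ 9
      (tendsto_natCast_atTop_atTop.const_mul_atTop (by norm_num))
  exact tendsto_const_nhds.div_atTop
    (tendsto_atTop_add_const_right _ (-1) (Real.tendsto_sqrt_atTop.comp h))

noncomputable def ratioPoly (p : ℝ) : ℝ :=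
  (1 + p + 4 * p ^ 2) * (1 + p + 3 * p ^ 2) / 2 * (1 - p) ^ 2
    + (1 + p + 4 * p ^ 2) * p ^ 3 * (1 - p) + p ^ 6

lemma continuous_ratioPoly : Continuous ratioPoly := by
  unfold ratioPoly
  fun_prop

lemma ratio_eq_ratioPoly_p0 (t : ℕ) :
    (Nat.choose (t + 6) 2 : ℝ) * p0 t ^ 4 * (1 - p0 t) ^ 2
        + (t + 6 : ℝ) * p0 t ^ 5 * (1 - p0 t) + p0 t ^ 6 = ratioPoly (p0 t) := by
  set p := p0 t
  have h := add_two_mul_p0_sq t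
  have h6 : ((t : ℝ) + 6) * p ^ 2 = 1 + p + 4 * p ^ 2 := by linear_combination h
  have h5 : ((t : ℝ) + 5) * p ^ 2 = 1 + p + 3 * p ^ 2 := by linear_combination h
  rw [ratioPoly, Nat.cast_choose_two]
  push_cast
  linear_combination (1 - p) ^ 2 / 2 * ((t + 6) * p ^ 2 * h5 + (1 + p + 3 * p ^ 2) * h6)
    + p ^ 3 * (1 - p) * h6

theorem stmt_4 :
    Filter.Tendsto (fun t : ℕ =>
      (Nat.choose (t + 6) 2 : ℝ) * p0 t ^ 4 * (1 - p0 t) ^ 2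
        + (t + 6 : ℝ) * p0 t ^ 5 * (1 - p0 t) + p0 t ^ 6)
      Filter.atTop (nhds (1 / 2)) := by
  simp_rw [ratio_eq_ratioPoly_p0]
  exact (continuous_ratioPoly.tendsto' 0 _ (by norm_num [ratioPoly])).comp tendsto_p0_atTop
end

section
/- If G ⊆ 2^{[n]} is r-wise t-intersecting, then σ_{i,j}(G) is also r-wise t-intersecting, for any 1 ≤ i, j ≤ n. -/
open Finset

/-!
Write `F_k = σ_{i,j}(A_k)` with `A_k ∈ G`; every `A_k` agrees with `F_k` outside `{i, j}`.
If some `F_{k₀}` was actually moved, then `i ∈ F_{k₀}` and `i ∉ A_{k₀}`. If `i` lies in every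
`F_k`, then `⋂ F_k` gains `i` where `⋂ A_k` can only lose `j`. Otherwise `i ∉ F_{k₁}` for
some `k₁`. A set `F_k` avoiding `i` was not moved, so `F_k`, or `F_k - j + i` when `j ∈ F_k`,
is a member of `G` avoiding `j` (else the shift would have moved `F_k`). Using these in place
of the `A_k` gives members of `G` whose intersection avoids `i` and `j`, hence lies in `⋂ F_k`.
-/

theorem Set.ncard_le_ncard_of_sdiff_eq {α : Type*} {s t P : Set α} (hP : P.Finite)
    (ht : t.Finite) (hsdiff : s \ P = t \ P) (hinter : (s ∩ P).ncard ≤ (t ∩ P).ncard) :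
    s.ncard ≤ t.ncard := by
  have hs : s.Finite := (ht.sdiff.union hP).subset <| by
    rw [← hsdiff, Set.sdiff_union_self]
    exact Set.subset_union_left
  rw [← Set.ncard_inter_add_ncard_sdiff_eq_ncard s P hs,
    ← Set.ncard_inter_add_ncard_sdiff_eq_ncard t P ht, hsdiff]
  omega

namespace Finset

variable {α ι : Type*} [DecidableEq α] {i j : α}

theorem iInter_coe_sdiff_eq {A B : ι → Finset α} {s : Finset α} (h : ∀ k, A k \ s = B k \ s) :
    (⋂ k, (A k : Set α)) \ s = (⋂ k, (B k : Set α)) \ s := by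
  ext x
  simp only [Set.mem_sdiff, Set.mem_iInter, mem_coe]
  refine and_congr_left fun hx => forall_congr' fun k => ?_
  simpa [hx] using congrArg (x ∈ ·) (h k)

theorem inter_pair_eq_singleton_iff {A : Finset α} (hij : i ≠ j) :
    A ∩ {i, j} = {j} ↔ i ∉ A ∧ j ∈ A := by
  simp only [Finset.ext_iff, mem_inter, mem_insert, mem_singleton]
  grind

theorem erase_union_singleton_sdiff_pair (i j : α) (A : Finset α) :
    (A.erase j ∪ {i}) \ {i, j} = A \ {i, j} := by
  ext x
  simp only [mem_sdiff, mem_union, mem_erase, mem_singleton, mem_insert]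
  tauto

theorem ncard_iInter_le_of_sdiff_pair_eq {A F : ι → Finset α}
    (hAF : ∀ k, A k \ {i, j} = F k \ {i, j}) {k₀ : ι} (hiA : i ∉ A k₀) (hiF : ∀ k, i ∈ F k) :
    (⋂ k, (A k : Set α)).ncard ≤ (⋂ k, (F k : Set α)).ncard := by
  have hfin : (⋂ k, (F k : Set α)).Finite := (F k₀).finite_toSet.subset (Set.iInter_subset _ k₀)
  refine Set.ncard_le_ncard_of_sdiff_eq (Set.toFinite {i, j}) hfin
    (by exact_mod_cast iInter_coe_sdiff_eq hAF) ?_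
  have hA : (⋂ k, (A k : Set α)) ∩ {i, j} ⊆ {j} := fun x ⟨hx, hxP⟩ => by
    rcases hxP with rfl | rfl
    · exact absurd (Set.mem_iInter.1 hx k₀) hiA
    · rfl
  have hF : ((⋂ k, (F k : Set α)) ∩ {i, j}).Nonempty := ⟨i, Set.mem_iInter.2 hiF, Or.inl rfl⟩
  calc _ ≤ ({j} : Set α).ncard := Set.ncard_le_ncard hA
    _ = 1 := Set.ncard_singleton j
    _ ≤ _ := (Set.ncard_pos (hfin.inter_of_left _)).2 hF

theorem iInter_coe_subset_of_sdiff_pair_eq {B F : ι → Finset α}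
    (hBF : ∀ k, B k \ {i, j} = F k \ {i, j}) {k₀ k₁ : ι} (hi : i ∉ B k₀) (hj : j ∉ B k₁) :
    ⋂ k, (B k : Set α) ⊆ ⋂ k, (F k : Set α) := fun x hx => by
  have hxB : ∀ k, x ∈ B k := Set.mem_iInter.1 hx
  have hxP : x ∉ ({i, j} : Finset α) := by
    simp only [mem_insert, mem_singleton, not_or]
    exact ⟨fun h => hi (h ▸ hxB k₀), fun h => hj (h ▸ hxB k₁)⟩
  exact Set.mem_iInter.2 fun k => mem_coe.2 (mem_sdiff.1 (hBF k ▸ mem_sdiff.2 ⟨hxB k, hxP⟩)).1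

end Finset

section Shift

variable {i j : ℕ} {G : Finset (Finset ℕ)} {A F : Finset ℕ}

theorem shiftSet_sdiff_pair : shiftSet i j G A \ {i, j} = A \ {i, j} := by
  unfold shiftSet
  split_ifs
  · exact Finset.erase_union_singleton_sdiff_pair i j A
  · rfl

theorem shiftSet_ne_self (h : shiftSet i j G A ≠ A) :
    i ∉ A ∧ j ∈ A ∧ shiftSet i j G A = A.erase j ∪ {i} := by
  unfold shiftSet at h ⊢
  split_ifs at h ⊢ with hc
  · have hjA : j ∈ A := (Finset.mem_inter.1 (hc.1 ▸ Finset.mem_singleton_self j)).1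
    refine ⟨fun hiA => h ?_, hjA, rfl⟩
    have hij : i = j := Finset.mem_singleton.1 (hc.1 ▸ Finset.mem_inter.2 ⟨hiA, by simp⟩)
    subst hij
    simp [Finset.insert_erase hiA]
  · exact absurd rfl h

theorem shiftSet_eq_self_of_notMem (h : i ∉ shiftSet i j G A) : shiftSet i j G A = A := by
  by_contra hne
  exact h ((shiftSet_ne_self hne).2.2 ▸ by simp)

theorem erase_union_mem_of_mem_shift (hij : i ≠ j) (hF : F ∈ shift i j G) (hiF : i ∉ F)
    (hjF : j ∈ F) : F.erase j ∪ {i} ∈ G := by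
  obtain ⟨A, hAG, rfl⟩ := Finset.mem_image.1 hF
  have hfixed := shiftSet_eq_self_of_notMem hiF
  rw [hfixed] at hiF hjF ⊢
  by_contra hnot
  unfold shiftSet at hfixed
  rw [if_pos ⟨(Finset.inter_pair_eq_singleton_iff hij).2 ⟨hiF, hjF⟩, hnot⟩] at hfixed
  exact hiF (hfixed ▸ by simp)

theorem exists_mem_sdiff_pair_eq_of_mem_shift (hij : i ≠ j) (hF : F ∈ shift i j G)
    (hiF : i ∉ F) : ∃ B ∈ G, B \ {i, j} = F \ {i, j} ∧ j ∉ B := by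
  by_cases hjF : j ∈ F
  · exact ⟨F.erase j ∪ {i}, erase_union_mem_of_mem_shift hij hF hiF hjF,
      Finset.erase_union_singleton_sdiff_pair i j F, by simp [hij.symm]⟩
  · obtain ⟨A, hAG, rfl⟩ := Finset.mem_image.1 hF
    exact ⟨shiftSet i j G A, by rw [shiftSet_eq_self_of_notMem hiF]; exact hAG, rfl, hjF⟩

theorem exists_mem_ncard_iInter_le_of_mem_shift {ι : Type*} {F : ι → Finset ℕ}
    (hF : ∀ k, F k ∈ shift i j G) :
    ∃ B : ι → Finset ℕ, (∀ k, B k ∈ G) ∧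
      (⋂ k, (B k : Set ℕ)).ncard ≤ (⋂ k, (F k : Set ℕ)).ncard := by
  by_cases hFG : ∀ k, F k ∈ G
  · exact ⟨F, hFG, le_rfl⟩
  obtain ⟨k₀, hk₀⟩ := not_forall.1 hFG
  choose A hAG hshift using fun k => Finset.mem_image.1 (hF k)
  obtain ⟨hiA₀, hjA₀, hF₀⟩ := shiftSet_ne_self fun h => hk₀ (hshift k₀ ▸ h ▸ hAG k₀)
  have hij : i ≠ j := fun h => hiA₀ (h ▸ hjA₀)
  have hiF₀ : i ∈ F k₀ := by rw [← hshift k₀, hF₀]; simp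
  have hAF_pair : ∀ k, A k \ {i, j} = F k \ {i, j} := fun k =>
    hshift k ▸ shiftSet_sdiff_pair.symm
  by_cases hall : ∀ k, i ∈ F k
  · exact ⟨A, hAG, Finset.ncard_iInter_le_of_sdiff_pair_eq hAF_pair hiA₀ hall⟩
  obtain ⟨k₁, hiF₁⟩ := not_forall.1 hall
  choose! C hCG hCF hjC using fun k (hk : i ∉ F k) =>
    exists_mem_sdiff_pair_eq_of_mem_shift hij (hF k) hk
  let B k := if i ∈ F k then A k else C k
  have hBG : ∀ k, B k ∈ G := fun k => by
    by_cases hk : i ∈ F k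
    · simpa only [B, if_pos hk] using hAG k
    · simpa only [B, if_neg hk] using hCG k hk
  have hBF : ∀ k, B k \ {i, j} = F k \ {i, j} := fun k => by
    by_cases hk : i ∈ F k
    · simpa only [B, if_pos hk] using hAF_pair k
    · simpa only [B, if_neg hk] using hCF k hk
  have hiB₀ : i ∉ B k₀ := by simpa only [B, if_pos hiF₀] using hiA₀
  have hjB₁ : j ∉ B k₁ := by simpa only [B, if_neg hiF₁] using hjC k₁ hiF₁
  have hfin : (⋂ k, (F k : Set ℕ)).Finite := (F k₀).finite_toSet.subset (Set.iInter_subset _ k₀)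
  exact ⟨B, hBG,
    Set.ncard_le_ncard (Finset.iInter_coe_subset_of_sdiff_pair_eq hBF hiB₀ hjB₁) hfin⟩

end Shift

theorem stmt_6_general (r t : ℕ) (G : Finset (Finset ℕ)) (i j : ℕ) (h : RWise r t G) :
    RWise r t (shift i j G) := fun _ hF =>
  let ⟨B, hBG, hle⟩ := exists_mem_ncard_iInter_le_of_mem_shift hF
  (h B hBG).trans hle

theorem stmt_6 (n r t : ℕ) (G : Finset (Finset ℕ)) (hG : ∀ A ∈ G, A ⊆ Finset.Icc 1 n)
    (i j : ℕ) (hi : 1 ≤ i) (hin : i ≤ n) (hj : 1 ≤ j) (hjn : j ≤ n)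
    (h : RWise r t G) : RWise r t (shift i j G) :=
  stmt_6_general r t G i j h
end

section
/- Let G ⊆ 2^{[n]} be (3,t)-maximal (a 3-wise t-intersecting family such that adding any new set destroys the 3-wise t-intersecting property), and let H = σ_{i,j}(G) for some 1 ≤ i,j ≤ n. If H ⊆ F_0^t = {F : [t] ⊆ F}, then G is contained in some family isomorphic to F_0^t; consequently G ≅ F_0^t and H = F_0^t. -/
open Finset

lemma iInter3_eq (f : Fin 3 → Finset ℕ) :
    (⋂ k, ((f k : Finset ℕ) : Set ℕ)) = ((f 0 ∩ f 1 ∩ f 2 : Finset ℕ) : Set ℕ) := by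
  ext x
  simp only [Set.mem_iInter, Finset.coe_inter, Set.mem_inter_iff, Finset.mem_coe]
  exact ⟨fun h => ⟨⟨h 0, h 1⟩, h 2⟩, fun h k => by fin_cases k <;> simp [h.1.1, h.1.2, h.2]⟩

lemma rwise3_iff (t : ℕ) (G : Finset (Finset ℕ)) :
    RWise 3 t G ↔ ∀ A ∈ G, ∀ B ∈ G, ∀ C ∈ G, t ≤ (A ∩ B ∩ C).card := by
  constructor
  · intro h A hA B hB C hC
    have h3 := h ![A, B, C] (by intro k; fin_cases k <;> simpa)
    rw [iInter3_eq, Set.ncard_coe_finset] at h3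
    simpa using h3
  · intro h f hf
    rw [iInter3_eq, Set.ncard_coe_finset]
    exact h _ (hf 0) _ (hf 1) _ (hf 2)

lemma max3_mem {n t : ℕ} {G : Finset (Finset ℕ)} (hG : Max3 n t G) (F : Finset ℕ)
    (hFn : F ⊆ Finset.Icc 1 n)
    (h : ∀ A ∈ insert F G, ∀ B ∈ insert F G, ∀ C ∈ insert F G, t ≤ (A ∩ B ∩ C).card) :
    F ∈ G := by
  by_contra hF
  exact hG.2.2 F hFn hF ((rwise3_iff t _).2 h)

lemma insert_superset_rwise {n t : ℕ} {G : Finset (Finset ℕ)} (hG : Max3 n t G)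
    (A F : Finset ℕ) (hA : A ∈ G) (hAF : A ⊆ F) :
    ∀ B ∈ insert F G, ∀ C ∈ insert F G, ∀ D ∈ insert F G, t ≤ (B ∩ C ∩ D).card := by
  have hg := (rwise3_iff t G).1 hG.2.1
  have rep : ∀ X ∈ insert F G, ∃ X' ∈ G, X' ⊆ X := by
    intro X hX
    rcases Finset.mem_insert.1 hX with rfl | hX
    · exact ⟨A, hA, hAF⟩
    · exact ⟨X, hX, Finset.Subset.rfl⟩
  intro B hB C hC D hD
  obtain ⟨B', hB', hBB⟩ := rep B hB
  obtain ⟨C', hC', hCC⟩ := rep C hC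
  obtain ⟨D', hD', hDD⟩ := rep D hD
  exact le_trans (hg B' hB' C' hC' D' hD')
    (Finset.card_le_card (inter_subset_inter (inter_subset_inter hBB hCC) hDD))

lemma compl_mem {n t : ℕ} {G : Finset (Finset ℕ)} (hG : Max3 n t G) (y : ℕ)
    (A : Finset ℕ) (hA : A ∈ G) (hy : y ∉ A) : (Finset.Icc 1 n).erase y ∈ G :=
  max3_mem hG _ (Finset.erase_subset _ _)
    (insert_superset_rwise hG A _ hA (Finset.subset_erase.2 ⟨hG.1 A hA, hy⟩))

lemma eq_filter_of {n t : ℕ} {G : Finset (Finset ℕ)} (hG : Max3 n t G)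
    (K : Finset ℕ) (hKt : t ≤ K.card) (hall : ∀ A ∈ G, K ⊆ A) :
    G = (Finset.Icc 1 n).powerset.filter (fun F => K ⊆ F) := by
  apply Finset.Subset.antisymm
  · intro A hA
    exact Finset.mem_filter.2 ⟨Finset.mem_powerset.2 (hG.1 A hA), hall A hA⟩
  · intro F hF
    obtain ⟨hFn, hKF⟩ := Finset.mem_filter.1 hF
    apply max3_mem hG F (Finset.mem_powerset.1 hFn)
    intro B hB C hC D hD
    have hK : ∀ X ∈ insert F G, K ⊆ X := by
      intro X hX; rcases Finset.mem_insert.1 hX with rfl | hX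
      · exact hKF
      · exact hall X hX
    calc t ≤ K.card := hKt
      _ ≤ _ := Finset.card_le_card
          (subset_inter (subset_inter (hK B hB) (hK C hC)) (hK D hD))

lemma erase_union_self {A : Finset ℕ} {j : ℕ} (hj : j ∈ A) : A.erase j ∪ {j} = A := by
  ext x
  simp only [Finset.mem_union, Finset.mem_erase, Finset.mem_singleton]
  constructor
  · rintro (⟨-, hx⟩ | rfl)
    · exact hx
    · exact hj
  · intro hx
    by_cases hxj : x = j
    · exact Or.inr hxj
    · exact Or.inl ⟨hxj, hx⟩

lemma cond_facts {i j : ℕ} {G : Finset (Finset ℕ)} {A : Finset ℕ} (hA : A ∈ G)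
    (h1 : A ∩ {i, j} = {j}) (h2 : (A.erase j ∪ {i}) ∉ G) : j ∈ A ∧ i ∉ A := by
  have hjA : j ∈ A := by
    have : j ∈ A ∩ {i, j} := h1.symm ▸ Finset.mem_singleton_self j
    exact (Finset.mem_inter.1 this).1
  refine ⟨hjA, fun hiA => ?_⟩
  have : i ∈ ({j} : Finset ℕ) :=
    h1 ▸ Finset.mem_inter.2 ⟨hiA, Finset.mem_insert_self i {j}⟩
  have hij : i = j := Finset.mem_singleton.1 this
  subst hij
  rw [erase_union_self hjA] at h2
  exact h2 hA

lemma shiftSet_injOn (i j : ℕ) (G : Finset (Finset ℕ)) :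
    Set.InjOn (shiftSet i j G) ↑G := by
  have recover : ∀ X : Finset ℕ, j ∈ X → i ∉ X →
      insert j ((X.erase j ∪ {i}).erase i) = X := by
    intro X hjX hiX
    ext x
    simp only [Finset.mem_insert, Finset.mem_erase, Finset.mem_union, Finset.mem_singleton]
    constructor
    · rintro (rfl | ⟨hxi, (⟨hxj, hx⟩ | rfl)⟩)
      · exact hjX
      · exact hx
      · exact absurd rfl hxi
    · intro hx
      by_cases hxj : x = j
      · exact Or.inl hxj
      · right
        refine ⟨?_, Or.inl ⟨hxj, hx⟩⟩
        rintro rfl; exact hiX hx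
  intro A hA B hB h
  unfold shiftSet at h
  split_ifs at h with h1 h2 h2
  · obtain ⟨hjA, hiA⟩ := cond_facts (Finset.mem_coe.1 hA) h1.1 h1.2
    obtain ⟨hjB, hiB⟩ := cond_facts (Finset.mem_coe.1 hB) h2.1 h2.2
    rw [← recover A hjA hiA, ← recover B hjB hiB, h]
  · exact absurd (h ▸ Finset.mem_coe.1 hB) h1.2
  · exact absurd (h ▸ Finset.mem_coe.1 hA) h2.2
  · exact h

lemma image_filter_perm (n : ℕ) (τ : Equiv.Perm ℕ)
    (hτ : ∀ x, x ∈ Finset.Icc 1 n ↔ τ x ∈ Finset.Icc 1 n) (K : Finset ℕ) :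
    ((Finset.Icc 1 n).powerset.filter (fun F => K ⊆ F)).image (fun A => A.image τ)
      = (Finset.Icc 1 n).powerset.filter (fun F => K.image τ ⊆ F) := by
  ext F
  simp only [Finset.mem_image, Finset.mem_filter, Finset.mem_powerset]
  constructor
  · rintro ⟨A, ⟨hAn, hKA⟩, rfl⟩
    constructor
    · intro x hx
      obtain ⟨a, ha, rfl⟩ := Finset.mem_image.1 hx
      exact (hτ a).1 (hAn ha)
    · exact Finset.image_subset_image hKA
  · rintro ⟨hFn, hKF⟩
    refine ⟨F.image τ.symm, ⟨?_, ?_⟩, ?_⟩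
    · intro x hx
      obtain ⟨a, ha, rfl⟩ := Finset.mem_image.1 hx
      have := hτ (τ.symm a)
      rw [Equiv.apply_symm_apply] at this
      exact this.2 (hFn ha)
    · intro k hk
      have : τ k ∈ F := hKF (Finset.mem_image_of_mem _ hk)
      have := Finset.mem_image_of_mem (⇑τ.symm) this
      simpa using this
    · rw [Finset.image_image]
      have : F.image (⇑τ ∘ ⇑τ.symm) = F.image id :=
        Finset.image_congr (fun x _ => by simp)
      rw [this, Finset.image_id]

lemma conclude {n t i j : ℕ} {G : Finset (Finset ℕ)}
    (hH : shift i j G ⊆ F0 n t) (τ : Equiv.Perm ℕ)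
    (hτ : ∀ x, x ∈ Finset.Icc 1 n ↔ τ x ∈ Finset.Icc 1 n)
    (hinv : ∀ A : Finset ℕ, (A.image τ).image τ = A)
    (himg : F0 n t = G.image (fun A => A.image τ)) :
    (∃ F : Finset (Finset ℕ), Iso n (F0 n t) F ∧ G ⊆ F) ∧
    Iso n G (F0 n t) ∧ shift i j G = F0 n t := by
  have hGimg : G = (F0 n t).image (fun A => A.image τ) := by
    rw [himg, Finset.image_image]
    have : G.image ((fun A => Finset.image (⇑τ) A) ∘ (fun A => Finset.image (⇑τ) A))
        = G.image id := Finset.image_congr (fun A _ => hinv A)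
    rw [this, Finset.image_id]
  refine ⟨⟨G, ⟨τ, hτ, hGimg⟩, Finset.Subset.rfl⟩, ⟨τ, hτ, himg⟩, ?_⟩
  apply Finset.eq_of_subset_of_card_le hH
  have h1 : (F0 n t).card = G.card := by
    rw [himg]
    exact Finset.card_image_of_injective _ (Finset.image_injective τ.injective)
  have h2 : (shift i j G).card = G.card :=
    Finset.card_image_of_injOn (shiftSet_injOn i j G)
  omega


theorem stmt_8 (n t : ℕ) (G : Finset (Finset ℕ)) (hG : Max3 n t G)
    (i j : ℕ) (hi : 1 ≤ i) (hin : i ≤ n) (hj : 1 ≤ j) (hjn : j ≤ n)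
    (hH : shift i j G ⊆ F0 n t) :
    (∃ F : Finset (Finset ℕ), Iso n (F0 n t) F ∧ G ⊆ F) ∧
    Iso n G (F0 n t) ∧ shift i j G = F0 n t := by
  have hmem : ∀ A ∈ G, Finset.Icc 1 t ⊆ shiftSet i j G A ∧
      shiftSet i j G A ⊆ Finset.Icc 1 n := by
    intro A hA
    have hsh : shiftSet i j G A ∈ shift i j G := Finset.mem_image_of_mem _ hA
    have := Finset.mem_filter.1 (hH hsh)
    exact ⟨this.2, Finset.mem_powerset.1 this.1⟩
  have dich : ∀ A ∈ G, Finset.Icc 1 t ⊆ A ∨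
      (i ≤ t ∧ t < j ∧ j ∈ A ∧ i ∉ A ∧ (Finset.Icc 1 t).erase i ⊆ A) := by
    intro A hA
    by_cases hc : A ∩ {i, j} = {j} ∧ (A.erase j ∪ {i}) ∉ G
    · obtain ⟨hjA, hiA⟩ := cond_facts hA hc.1 hc.2
      have hij : i ≠ j := fun h => hiA (h ▸ hjA)
      have hs : shiftSet i j G A = A.erase j ∪ {i} := by
        unfold shiftSet; rw [if_pos hc]
      have hsub : Finset.Icc 1 t ⊆ A.erase j ∪ {i} := hs ▸ (hmem A hA).1
      have htj : t < j := by
        by_contra hle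
        have hjt : j ∈ Finset.Icc 1 t := Finset.mem_Icc.2 ⟨hj, not_lt.1 hle⟩
        have := hsub hjt
        simp only [Finset.mem_union, Finset.mem_erase, Finset.mem_singleton] at this
        rcases this with ⟨h', -⟩ | h'
        · exact h' rfl
        · exact hij h'.symm
      by_cases hit : i ≤ t
      · right
        refine ⟨hit, htj, hjA, hiA, ?_⟩
        intro k hk
        obtain ⟨hki, hk2⟩ := Finset.mem_erase.1 hk
        rcases Finset.mem_union.1 (hsub hk2) with h' | h'
        · exact (Finset.mem_erase.1 h').2
        · exact absurd (Finset.mem_singleton.1 h') hki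
      · left
        intro k hk
        rcases Finset.mem_union.1 (hsub hk) with h' | h'
        · exact (Finset.mem_erase.1 h').2
        · exfalso
          have hk' := (Finset.mem_Icc.1 hk).2
          have : k = i := Finset.mem_singleton.1 h'
          omega
    · left
      have hs : shiftSet i j G A = A := by unfold shiftSet; rw [if_neg hc]
      exact hs ▸ (hmem A hA).1
  by_cases hall : ∀ A ∈ G, Finset.Icc 1 t ⊆ A
  · have hGF0 : G = F0 n t :=
      eq_filter_of hG (Finset.Icc 1 t) (by simp) hall
    apply conclude hH (Equiv.refl ℕ) (by simp) (by simp)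
    rw [hGF0]
    have : (F0 n t).image (fun A => A.image ⇑(Equiv.refl ℕ)) = (F0 n t).image id := by
      apply Finset.image_congr
      intro A _
      simp
    rw [this, Finset.image_id]
  · push_neg at hall
    obtain ⟨A0, hA0, hA0t⟩ := hall
    obtain ⟨hit, htj, hjA0, hiA0, hK2A0⟩ := (dich A0 hA0).resolve_left hA0t
    have hij : i ≠ j := by omega
    have halljmem : ∀ A ∈ G, j ∈ A := by
      intro A hA
      by_contra hjA
      have hFi : (Finset.Icc 1 n).erase i ∈ G := compl_mem hG i A0 hA0 hiA0
      have hFj : (Finset.Icc 1 n).erase j ∈ G := compl_mem hG j A hA hjA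
      have heq : ((Finset.Icc 1 n).erase i).erase j ∪ {i} = (Finset.Icc 1 n).erase j := by
        ext x
        simp only [Finset.mem_union, Finset.mem_erase, Finset.mem_Icc, Finset.mem_singleton]
        omega
      have hcond : ¬((((Finset.Icc 1 n).erase i) ∩ {i, j} = {j}) ∧
          ((((Finset.Icc 1 n).erase i).erase j ∪ {i}) ∉ G)) := by
        rintro ⟨-, hno⟩
        rw [heq] at hno
        exact hno hFj
      have hs : shiftSet i j G ((Finset.Icc 1 n).erase i) = (Finset.Icc 1 n).erase i := by
        unfold shiftSet; rw [if_neg hcond]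
      have hmemF0 := (hmem _ hFi).1
      rw [hs] at hmemF0
      have : i ∈ (Finset.Icc 1 n).erase i := hmemF0 (Finset.mem_Icc.2 ⟨hi, hit⟩)
      simp at this
    set K2 : Finset ℕ := insert j ((Finset.Icc 1 t).erase i) with hK2
    have hiIcc : i ∈ Finset.Icc 1 t := Finset.mem_Icc.2 ⟨hi, hit⟩
    have hK2card : K2.card = t := by
      rw [hK2, Finset.card_insert_of_notMem (by
        simp only [Finset.mem_erase, Finset.mem_Icc]
        omega), Finset.card_erase_of_mem hiIcc, Nat.card_Icc]
      omega
    have hallK2 : ∀ A ∈ G, K2 ⊆ A := by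
      intro A hA
      have hjA := halljmem A hA
      intro x hx
      rcases Finset.mem_insert.1 hx with rfl | hx
      · exact hjA
      · rcases dich A hA with h1 | h1
        · exact h1 (Finset.mem_of_mem_erase hx)
        · exact h1.2.2.2.2 hx
    have hGeq : G = (Finset.Icc 1 n).powerset.filter (fun F => K2 ⊆ F) :=
      eq_filter_of hG K2 (le_of_eq hK2card.symm) hallK2
    have hτ : ∀ x, x ∈ Finset.Icc 1 n ↔ Equiv.swap i j x ∈ Finset.Icc 1 n := by
      intro x
      rcases eq_or_ne x i with rfl | hxi
      · rw [Equiv.swap_apply_left]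
        simp only [Finset.mem_Icc]; omega
      · rcases eq_or_ne x j with rfl | hxj
        · rw [Equiv.swap_apply_right]
          simp only [Finset.mem_Icc]; omega
        · rw [Equiv.swap_apply_of_ne_of_ne hxi hxj]
    have hinv : ∀ A : Finset ℕ, (A.image (Equiv.swap i j)).image (Equiv.swap i j) = A := by
      intro A
      rw [Finset.image_image]
      have : A.image (⇑(Equiv.swap i j) ∘ ⇑(Equiv.swap i j)) = A.image id :=
        Finset.image_congr (fun x _ => Equiv.swap_apply_self i j x)
      rw [this, Finset.image_id]
    have hK2img : K2.image (Equiv.swap i j) = Finset.Icc 1 t := by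
      rw [hK2, Finset.image_insert, Equiv.swap_apply_right]
      have herase : ((Finset.Icc 1 t).erase i).image (Equiv.swap i j)
          = (Finset.Icc 1 t).erase i := by
        have : ((Finset.Icc 1 t).erase i).image (⇑(Equiv.swap i j))
            = ((Finset.Icc 1 t).erase i).image id := by
          apply Finset.image_congr
          intro x hx
          obtain ⟨hxi, hxt⟩ := Finset.mem_erase.1 hx
          have := (Finset.mem_Icc.1 hxt).2
          exact Equiv.swap_apply_of_ne_of_ne hxi (by omega)
        rw [this, Finset.image_id]
      rw [herase, Finset.insert_erase hiIcc]
    apply conclude hH (Equiv.swap i j) hτ hinv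
    rw [hGeq, image_filter_perm n (Equiv.swap i j) hτ K2, hK2img]
    rfl
end

section
/- If G ⊆ 2^{[n]} is 2-wise t-intersecting and 0 < p ≤ 1/(t+1), then μ_p(G) ≤ p^t. -/
open Finset

namespace FFFLO

/-- alternating partial sum of binomials -/
lemma alt_sum (s t : ℕ) (hs : 1 ≤ s) :
    ∑ k ∈ Finset.range (t+1), (-1:ℝ)^k * (s.choose k : ℝ)
      = (-1)^t * ((s-1).choose t : ℝ) := by
  obtain ⟨s', rfl⟩ : ∃ s', s = s' + 1 := ⟨s - 1, by omega⟩
  induction t with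
  | zero => simp
  | succ t ih =>
    rw [Finset.sum_range_succ, ih]
    have hpas : ((s'+1).choose (t+1) : ℝ) = (s'.choose t : ℝ) + (s'.choose (t+1) : ℝ) := by
      rw [Nat.choose_succ_succ]; push_cast; ring
    simp only [Nat.add_sub_cancel] at *
    rw [hpas]
    ring

noncomputable def Vv (p : ℝ) (t s : ℕ) : ℝ :=
  ∑ k ∈ Finset.range t, (-1:ℝ)^k * (s.choose k : ℝ) * p^(t-k)

lemma Vv_succ (p : ℝ) (t s : ℕ) :
    Vv p (t+1) s = p * Vv p t s + (-1)^t * p * (s.choose t : ℝ) := by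
  unfold Vv
  rw [Finset.sum_range_succ, Finset.mul_sum]
  congr 1
  · apply Finset.sum_congr rfl
    intro k hk
    simp only [Finset.mem_range] at hk
    have : t + 1 - k = (t - k) + 1 := by omega
    rw [this, pow_succ]
    ring
  · simp; ring

lemma Vv_rec (p : ℝ) (t s : ℕ) :
    p * Vv p (t+1) (s+1) + (1-p) * Vv p (t+1) s
      = (-1)^t * p * (s.choose t : ℝ) := by
  induction t with
  | zero =>
    simp [Vv]
    ring
  | succ t ih =>
    rw [Vv_succ p (t+1) (s+1), Vv_succ p (t+1) s]
    have hpas : ((s+1).choose (t+1) : ℝ) = (s.choose t : ℝ) + (s.choose (t+1) : ℝ) := by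
      rw [Nat.choose_succ_succ]; push_cast; ring
    calc p * (p * Vv p (t+1) (s+1) + (-1)^(t+1) * p * ((s+1).choose (t+1) : ℝ))
          + (1-p) * (p * Vv p (t+1) s + (-1)^(t+1) * p * (s.choose (t+1) : ℝ))
        = p * (p * Vv p (t+1) (s+1) + (1-p) * Vv p (t+1) s)
          + (-1)^(t+1) * p * (p * ((s+1).choose (t+1):ℝ) + (1-p) * (s.choose (t+1):ℝ)) := by ring
      _ = (-1)^(t+1) * p * ((s.choose (t+1)) : ℝ) := by
          rw [ih, hpas]; ring


noncomputable def lam (p : ℝ) (t s : ℕ) : ℝ :=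
  ∑ k ∈ Finset.range t,
    (p/(1-p))^k * ((1 - p^(t-k))/(1 - p^t)) * (s.choose k : ℝ) * (-(p/(1-p)))^(s-k)

lemma lam_Gform (p : ℝ) (t s : ℕ) (hpt : (1:ℝ) - p^t ≠ 0) (hs : 1 ≤ s) (ht : 1 ≤ t) :
    (1 - p^t) * lam p t s
      = (-(p/(1-p)))^s * ((-1)^(t-1) * (((s-1).choose (t-1) : ℝ)) - Vv p t s) := by
  set r := p/(1-p) with hr
  have key : ∀ k ∈ Finset.range t,
      (1 - p^t) * (r^k * ((1 - p^(t-k))/(1 - p^t)) * (s.choose k : ℝ) * (-r)^(s-k))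
        = (-r)^s * ((-1)^k * (s.choose k : ℝ) * (1 - p^(t-k))) := by
    intro k hk
    rcases le_or_gt k s with hks | hks
    · have hc : (1 - p^t) * ((1 - p^(t-k))/(1 - p^t)) = 1 - p^(t-k) := by
        rw [mul_comm, div_mul_eq_mul_div, mul_div_assoc, div_self hpt, mul_one]
      have h1 : (1 - p^t) * (r^k * ((1 - p^(t-k))/(1 - p^t)) * (s.choose k : ℝ) * (-r)^(s-k))
          = (r^k * (-r)^(s-k)) * ((1 - p^(t-k)) * (s.choose k : ℝ)) := by
        calc (1 - p^t) * (r^k * ((1 - p^(t-k))/(1 - p^t)) * (s.choose k : ℝ) * (-r)^(s-k))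
            = ((1 - p^t) * ((1 - p^(t-k))/(1 - p^t))) * (r^k * (s.choose k : ℝ) * (-r)^(s-k)) := by
              ring
          _ = (r^k * (-r)^(s-k)) * ((1 - p^(t-k)) * (s.choose k : ℝ)) := by rw [hc]; ring
      have h2 : r^k * (-r)^(s-k) = (-r)^s * (-1)^k := by
        rw [neg_pow r (s-k), neg_pow r s]
        have e1 : r^k * ((-1:ℝ)^(s-k) * r^(s-k)) = (-1)^(s-k) * r^s := by
          rw [mul_comm (r^k), mul_assoc, ← pow_add]
          congr 2; omega
        rw [e1]
        have e2 : ((-1:ℝ))^(s-k) = (-1)^s * (-1)^k := by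
          rw [← pow_add]
          have : s + k = (s-k) + 2*k := by omega
          rw [this, pow_add, pow_mul]
          norm_num
        rw [e2]; ring
      rw [h1, h2]; ring
    · have : s.choose k = 0 := Nat.choose_eq_zero_of_lt hks
      rw [this]; push_cast; ring
  unfold lam
  rw [← hr, Finset.mul_sum, Finset.sum_congr rfl key, ← Finset.mul_sum]
  congr 1
  have split : ∑ k ∈ Finset.range t, ((-1:ℝ))^k * (s.choose k : ℝ) * (1 - p^(t-k))
      = (∑ k ∈ Finset.range t, ((-1:ℝ))^k * (s.choose k : ℝ)) - Vv p t s := by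
    unfold Vv
    rw [← Finset.sum_sub_distrib]
    apply Finset.sum_congr rfl
    intro k _; ring
  rw [split]
  obtain ⟨t', rfl⟩ : ∃ t', t = t' + 1 := ⟨t - 1, by omega⟩
  rw [alt_sum s t' hs]
  simp

lemma lam_zero (p : ℝ) (t : ℕ) (ht : 1 ≤ t) (hpt : (1:ℝ) - p^t ≠ 0) : lam p t 0 = 1 := by
  unfold lam
  rw [Finset.sum_eq_single_of_mem 0 (Finset.mem_range.mpr (by omega))]
  · simp [div_self hpt]
  · intro k hk hk0
    have : (0:ℕ).choose k = 0 := Nat.choose_eq_zero_of_lt (by omega)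
    rw [this]; push_cast; ring

lemma lam_one' (p : ℝ) (t : ℕ) (ht : 1 ≤ t) (hq : (1:ℝ) - p ≠ 0) (hpt : (1:ℝ) - p^t ≠ 0) :
    (1 - p^t) * lam p t 1 = -p^t := by
  rw [lam_Gform p t 1 hpt le_rfl ht]
  obtain ⟨t', rfl⟩ : ∃ t', t = t' + 1 := ⟨t - 1, by omega⟩
  simp only [Nat.add_sub_cancel, Nat.sub_self]
  rcases Nat.eq_zero_or_pos t' with rfl | ht'
  · simp [Vv]
    field_simp
  · have hC : ((0:ℕ).choose t' : ℝ) = 0 := by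
      rw [Nat.choose_eq_zero_of_lt (by omega)]; norm_num
    have hV : Vv p (t'+1) 1 = p^(t'+1) - p^t' := by
      unfold Vv
      rw [← Finset.sum_subset (Finset.range_subset_range.mpr (show 2 ≤ t'+1 by omega))]
      · rw [Finset.sum_range_succ, Finset.sum_range_succ, Finset.sum_range_zero,
            show t' + 1 - 1 = t' from by omega]
        norm_num
        ring
      · intro k hk hk2
        simp only [Finset.mem_range] at hk hk2
        rw [Nat.choose_eq_zero_of_lt (show 1 < k by omega)]
        push_cast; ring
    rw [hC, hV]
    field_simp
    ring

/-- the increment terms -/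
noncomputable def TT (p : ℝ) (t σ : ℕ) : ℝ :=
  (-1)^(σ+t) * (p/(1-p))^σ * ((σ-1).choose (t-1) : ℝ)

lemma lam_diff (p : ℝ) (t s : ℕ) (hs : 1 ≤ s) (ht : 1 ≤ t)
    (hq : (1:ℝ) - p ≠ 0) (hpt : (1:ℝ) - p^t ≠ 0) :
    (1 - p^t) * (lam p t (s+1) - lam p t s) = TT p t s := by
  obtain ⟨t', rfl⟩ : ∃ t', t = t' + 1 := ⟨t - 1, by omega⟩
  have h1 := lam_Gform p (t'+1) (s+1) hpt (by omega) ht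
  have h2 := lam_Gform p (t'+1) s hpt hs ht
  have hV : (p/(1-p)) * Vv p (t'+1) (s+1) + Vv p (t'+1) s
      = (-1)^t' * (p/(1-p)) * (s.choose t' : ℝ) := by
    have h := Vv_rec p t' s
    field_simp
    linarith [h]
  simp only [Nat.add_sub_cancel] at h1 h2 ⊢
  unfold TT
  simp only [Nat.add_sub_cancel]
  have expand : (1 - p^(t'+1)) * (lam p (t'+1) (s+1) - lam p (t'+1) s)
      = (1 - p^(t'+1)) * lam p (t'+1) (s+1) - (1 - p^(t'+1)) * lam p (t'+1) s := by ring
  rw [expand, h1, h2]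
  set r := p/(1-p) with hr
  have e1 : (-r)^(s+1) = (-r)^s * (-r) := by rw [pow_succ]
  rw [e1]
  have e2 : (-r:ℝ)^s = (-1)^s * r^s := by rw [neg_pow]
  rw [e2]
  have e3 : ((-1:ℝ))^(s + (t'+1)) = (-1)^s * (-1)^t' * (-1) := by
    rw [pow_add, pow_succ]; ring
  rw [e3]
  linear_combination ((-1:ℝ))^s * r^s * hV

lemma lam_partial (p : ℝ) (t : ℕ) (ht : 1 ≤ t) (hq : (1:ℝ) - p ≠ 0) (hpt : (1:ℝ) - p^t ≠ 0) :
    ∀ s, 1 ≤ s → (1 - p^t) * lam p t s + p^t = ∑ σ ∈ Finset.Icc 1 (s-1), TT p t σ := by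
  intro s hs
  induction s, hs using Nat.le_induction with
  | base => simp [lam_one' p t ht hq hpt]
  | succ s hs ih =>
    have hstep := lam_diff p t s hs ht hq hpt
    have e : (1 - p^t) * lam p t (s+1) + p^t
        = ((1 - p^t) * lam p t s + p^t) + (1 - p^t) * (lam p t (s+1) - lam p t s) := by ring
    rw [e, ih, hstep]
    obtain ⟨m, rfl⟩ : ∃ m, s = m + 1 := ⟨s - 1, by omega⟩
    simp only [Nat.add_sub_cancel]
    rw [Finset.sum_Icc_succ_top (by omega : 1 ≤ m + 1)]

lemma choose_le_mul (t m : ℕ) (ht : 1 ≤ t) (htm : t ≤ m) :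
    (m.choose (t-1)) ≤ t * ((m-1).choose (t-1)) := by
  obtain ⟨t', rfl⟩ : ∃ t', t = t' + 1 := ⟨t - 1, by omega⟩
  obtain ⟨m', rfl⟩ : ∃ m', m = m' + 1 := ⟨m - 1, by omega⟩
  simp only [Nat.add_sub_cancel]
  rcases Nat.eq_zero_or_pos t' with rfl | ht'
  · simp
  obtain ⟨i, rfl⟩ : ∃ i, t' = i + 1 := ⟨t' - 1, by omega⟩
  rw [Nat.choose_succ_succ]
  have key : m'.choose i ≤ (i+1) * (m'.choose (i+1)) := by
    have h := Nat.choose_succ_right_eq m' i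
    have hmi : 1 ≤ m' - i := by omega
    calc m'.choose i ≤ m'.choose i * (m' - i) := Nat.le_mul_of_pos_right _ (by omega)
      _ = m'.choose (i+1) * (i+1) := h.symm
      _ = (i+1) * (m'.choose (i+1)) := by ring
  calc m'.choose i + m'.choose (i+1) ≤ (i+1) * (m'.choose (i+1)) + m'.choose (i+1) :=
        Nat.add_le_add_right key _
    _ = (i + 1 + 1) * (m'.choose (i+1)) := by ring

lemma PS_nonneg (p : ℝ) (t : ℕ) (ht : 1 ≤ t) (hr0 : 0 ≤ p/(1-p))
    (hrt : (p/(1-p)) * t ≤ 1) :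
    ∀ m, 0 ≤ ∑ σ ∈ Finset.Icc 1 m, TT p t σ := by
  intro m
  induction m using Nat.strong_induction_on with
  | _ m ih =>
    match m with
    | 0 => simp
    | (m+1) =>
      rw [Finset.sum_Icc_succ_top (by omega : 1 ≤ m + 1)]
      set r := p/(1-p) with hr
      by_cases hC : ((m).choose (t-1)) = 0
      · have : TT p t (m+1) = 0 := by
          unfold TT
          rw [show m + 1 - 1 = m from by omega, hC]
          push_cast; ring
        rw [this, add_zero]
        exact ih m (by omega)
      · by_cases hpar : Even (m + 1 + t)
        · have hTpos : 0 ≤ TT p t (m+1) := by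
            unfold TT
            rw [hpar.neg_one_pow, show m + 1 - 1 = m from by omega]
            positivity
          exact add_nonneg (ih m (by omega)) hTpos
        · -- odd case: m ≥ t, pair with previous term
          have htm : t ≤ m := by
            have h1 : t - 1 ≤ m := by
              by_contra hcon
              exact hC (Nat.choose_eq_zero_of_lt (by omega))
            rcases Nat.lt_or_ge (m) t with hlt | hge
            · exfalso
              have : m = t - 1 := by omega
              apply hpar
              rw [this, show t - 1 + 1 + t = 2*t from by omega]
              exact even_two_mul t
            · exact hge
          obtain ⟨m', rfl⟩ : ∃ m', m = m' + 1 := ⟨m - 1, by omega⟩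
          rw [Finset.sum_Icc_succ_top (by omega : 1 ≤ m' + 1)]
          have hE : Even (m' + 1 + t) := by
            by_contra h
            exact hpar (by
              rw [show m'+1+1+t = (m'+1+t)+1 from by ring]
              exact Nat.even_add_one.mpr h)
          have hO : Odd (m' + 1 + 1 + t) := by
            rw [show m'+1+1+t = (m'+1+t)+1 from by ring]
            exact Even.add_one hE
          have hpair : 0 ≤ TT p t (m'+1) + TT p t (m'+1+1) := by
            unfold TT
            simp only [Nat.add_sub_cancel]
            have hparity1 : ((-1:ℝ))^(m'+1+t) = 1 := hE.neg_one_pow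
            have hparity2 : ((-1:ℝ))^(m'+1+1+t) = -1 := hO.neg_one_pow
            rw [hparity1, hparity2]
            have h0 : (0:ℝ) ≤ r^(m'+1) := pow_nonneg hr0 _
            have hCm : (0:ℝ) ≤ (m'.choose (t-1):ℝ) := by positivity
            have hb : (((m'+1).choose (t-1) : ℝ)) ≤ (t:ℝ) * (m'.choose (t-1):ℝ) := by
              have h := choose_le_mul t (m'+1) ht htm
              simp only [Nat.add_sub_cancel] at h
              exact_mod_cast h
            have key : r^(m'+1+1) * (((m'+1).choose (t-1):ℝ)) ≤ r^(m'+1) * (m'.choose (t-1):ℝ) := by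
              rw [pow_succ]
              calc r^(m'+1) * r * (((m'+1).choose (t-1)):ℝ)
                  ≤ r^(m'+1) * r * ((t:ℝ) * (m'.choose (t-1):ℝ)) :=
                    mul_le_mul_of_nonneg_left hb (mul_nonneg h0 hr0)
                _ = (r * (t:ℝ)) * (r^(m'+1) * (m'.choose (t-1):ℝ)) := by ring
                _ ≤ 1 * (r^(m'+1) * (m'.choose (t-1):ℝ)) :=
                    mul_le_mul_of_nonneg_right hrt (mul_nonneg h0 hCm)
                _ = r^(m'+1) * (m'.choose (t-1):ℝ) := one_mul _
            nlinarith [key]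
          have hih := ih m' (by omega)
          linarith [hpair, hih]


lemma lam_lower (p : ℝ) (t s : ℕ) (ht : 1 ≤ t) (hs : 1 ≤ s) (hp : 0 < p)
    (hpt1 : p * ((t:ℝ)+1) ≤ 1) : -(p^t/(1-p^t)) ≤ lam p t s := by
  have htR : (1:ℝ) ≤ (t:ℝ) := by exact_mod_cast ht
  have hp1 : p < 1 := by nlinarith
  have hq : (0:ℝ) < 1 - p := by linarith
  have hqne : (1:ℝ) - p ≠ 0 := ne_of_gt hq
  have hptpow : p ^ t < 1 := pow_lt_one₀ (le_of_lt hp) hp1 (by omega)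
  have h1pt : (0:ℝ) < 1 - p^t := by linarith
  have hptne : (1:ℝ) - p^t ≠ 0 := ne_of_gt h1pt
  have hr0 : 0 ≤ p/(1-p) := by positivity
  have hrt : (p/(1-p)) * (t:ℝ) ≤ 1 := by
    rw [div_mul_eq_mul_div, div_le_one hq]
    nlinarith
  have hps := lam_partial p t ht hqne hptne s hs
  have hPS := PS_nonneg p t ht hr0 hrt (s-1)
  rw [← hps] at hPS
  rw [← neg_div, div_le_iff₀ h1pt]
  linarith

noncomputable def uu (p : ℝ) (A : Finset ℕ) (i : ℕ) : ℝ := if i ∈ A then 1 - p else -p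

noncomputable def zz (p : ℝ) (A B : Finset ℕ) (i : ℕ) : ℝ :=
  uu p A i * uu p B i / (p * (1-p))

lemma sum_powerset_prod (Y : Finset ℕ) (w : ℕ → ℝ) :
    ∑ S ∈ Y.powerset, ∏ i ∈ S, w i = ∏ i ∈ Y, (1 + w i) := by
  have h := Finset.prod_add w (fun _ => (1:ℝ)) Y
  simp only [Finset.prod_const_one, mul_one] at h
  rw [← h]
  apply Finset.prod_congr rfl
  intro i _; ring

lemma zz_one (p : ℝ) (hp : 0 < p) (hp1 : p < 1) (A B : Finset ℕ) (i : ℕ)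
    (hiA : i ∈ A) (hiB : i ∈ B) : zz p A B i = (1-p)/p := by
  unfold zz uu
  rw [if_pos hiA, if_pos hiB, show p * (1-p) = (1-p) * p from mul_comm _ _]
  exact mul_div_mul_left _ _ (by linarith)

/-- key support property of the kernel -/
lemma support_kernel (p : ℝ) (hp : 0 < p) (hp1 : p < 1) (t : ℕ) (ht : 1 ≤ t)
    (X A B : Finset ℕ) (hA : A ⊆ X) (hAB : t ≤ (A ∩ B).card) :
    ∑ S ∈ X.powerset, lam p t S.card * ∏ i ∈ S, zz p A B i = 0 := by
  set r := p/(1-p) with hr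
  have hexp : ∀ S ∈ X.powerset, lam p t S.card * ∏ i ∈ S, zz p A B i
      = ∑ k ∈ Finset.range t, (r^k * ((1 - p^(t-k))/(1 - p^t)))
          * ((S.card.choose k : ℝ) * ((-r)^(S.card - k) * ∏ i ∈ S, zz p A B i)) := by
    intro S _
    unfold lam
    rw [Finset.sum_mul]
    apply Finset.sum_congr rfl
    intro k _; ring
  rw [Finset.sum_congr rfl hexp, Finset.sum_comm]
  apply Finset.sum_eq_zero
  intro k hk
  rw [← Finset.mul_sum]
  have hinner : ∑ S ∈ X.powerset,
      ((S.card.choose k : ℝ) * ((-r)^(S.card - k) * ∏ i ∈ S, zz p A B i)) = 0 := by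
    have hcard : ∀ S ∈ X.powerset,
        ((S.card.choose k : ℝ) * ((-r)^(S.card - k) * ∏ i ∈ S, zz p A B i))
          = ∑ T ∈ S.powersetCard k, ((-r)^(S.card - k) * ∏ i ∈ S, zz p A B i) := by
      intro S _
      rw [Finset.sum_const, ← Finset.card_powersetCard k S]
      rw [nsmul_eq_mul]
    rw [Finset.sum_congr rfl hcard]
    rw [Finset.sum_comm' (t' := X.powersetCard k)
      (s' := fun T => X.powerset.filter (fun S => T ⊆ S)) ?hiff]
    case hiff =>
      intro S T
      simp only [Finset.mem_powerset, Finset.mem_powersetCard, Finset.mem_filter]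
      constructor
      · rintro ⟨hSX, hTS, hTkk⟩
        exact ⟨⟨hSX, hTS⟩, hTS.trans hSX, hTkk⟩
      · rintro ⟨⟨hSX, hTS⟩, _, hTkk⟩
        exact ⟨hSX, hTS, hTkk⟩
    apply Finset.sum_eq_zero
    intro T hT
    rw [Finset.mem_powersetCard] at hT
    obtain ⟨hTX, hTk⟩ := hT
    -- reindex by S ↦ S \ T
    have hbij : ∑ S ∈ X.powerset.filter (fun S => T ⊆ S),
        ((-r)^(S.card - k) * ∏ i ∈ S, zz p A B i)
        = ∑ S' ∈ (X \ T).powerset,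
            (∏ i ∈ T, zz p A B i) * ∏ i ∈ S', ((-r) * zz p A B i) := by
      apply Finset.sum_nbij' (i := fun S => S \ T) (j := fun S' => T ∪ S')
      · intro S hS
        rw [Finset.mem_filter, Finset.mem_powerset] at hS
        rw [Finset.mem_powerset]
        exact Finset.sdiff_subset_sdiff hS.1 (le_refl T)
      · intro S' hS'
        rw [Finset.mem_powerset] at hS'
        rw [Finset.mem_filter, Finset.mem_powerset]
        refine ⟨Finset.union_subset hTX (hS'.trans (Finset.sdiff_subset)), Finset.subset_union_left⟩
      · intro S hS
        rw [Finset.mem_filter] at hS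
        exact Finset.union_sdiff_of_subset hS.2
      · intro S' hS'
        rw [Finset.mem_powerset] at hS'
        apply Finset.union_sdiff_cancel_left
        exact Finset.disjoint_of_subset_right hS' Finset.sdiff_disjoint.symm
      · intro S hS
        rw [Finset.mem_filter, Finset.mem_powerset] at hS
        obtain ⟨hSX, hTS⟩ := hS
        have hc : S.card - k = (S \ T).card := by
          rw [Finset.card_sdiff_of_subset hTS, hTk]
        rw [hc]
        rw [Finset.prod_mul_distrib, Finset.prod_const]
        rw [← Finset.prod_sdiff hTS]
        ring
    rw [hbij, ← Finset.mul_sum, sum_powerset_prod]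
    -- the product over X \ T vanishes
    have hzero : ∏ i ∈ X \ T, (1 + (-r) * zz p A B i) = 0 := by
      have hex : ∃ i₀, i₀ ∈ (A ∩ B) ∧ i₀ ∉ T := by
        by_contra hcon
        push_neg at hcon
        have hsub : A ∩ B ⊆ T := fun x hx => hcon x hx
        have := Finset.card_le_card hsub
        rw [hTk] at this
        rw [Finset.mem_range] at hk
        omega
      obtain ⟨i₀, hi₀AB, hi₀T⟩ := hex
      rw [Finset.mem_inter] at hi₀AB
      apply Finset.prod_eq_zero (i := i₀)
      · rw [Finset.mem_sdiff]
        exact ⟨hA hi₀AB.1, hi₀T⟩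
      · rw [zz_one p hp hp1 A B i₀ hi₀AB.1 hi₀AB.2]
        have hq : (1:ℝ) - p ≠ 0 := by linarith
        have hp' : p ≠ 0 := ne_of_gt hp
        rw [hr]
        field_simp
        ring
    rw [hzero, mul_zero]
  rw [hinner, mul_zero]

lemma one_add_div' (a b : ℝ) (hb : b ≠ 0) : 1 + a/b = (b+a)/b := by
  rw [add_div, div_self hb]

lemma diag_kernel (p : ℝ) (hp : 0 < p) (hp1 : p < 1) (X A B : Finset ℕ)
    (hA : A ⊆ X) (hB : B ⊆ X) :
    ∑ S ∈ X.powerset, ∏ i ∈ S, zz p A B i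
      = if A = B then (p^A.card * (1-p)^(X.card - A.card))⁻¹ else 0 := by
  have hpne : p ≠ 0 := ne_of_gt hp
  have hqne : (1:ℝ) - p ≠ 0 := by linarith
  rw [sum_powerset_prod]
  by_cases hABeq : A = B
  · subst hABeq
    rw [if_pos rfl]
    rw [← Finset.prod_sdiff hA]
    have h1 : ∀ i ∈ X \ A, 1 + zz p A A i = (1-p)⁻¹ := by
      intro i hi
      rw [Finset.mem_sdiff] at hi
      unfold zz uu
      rw [if_neg hi.2, show -p * -p = p * p from by ring,
          one_add_div' _ _ (mul_ne_zero hpne hqne),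
          show p * (1-p) + p * p = p from by ring,
          div_mul_eq_div_div, div_self hpne, one_div]
    have h2 : ∀ i ∈ A, 1 + zz p A A i = p⁻¹ := by
      intro i hi
      unfold zz uu
      rw [if_pos hi, one_add_div' _ _ (mul_ne_zero hpne hqne),
          show p * (1-p) + (1-p) * (1-p) = 1 - p from by ring,
          mul_comm p (1-p), div_mul_eq_div_div, div_self hqne, one_div]
    rw [Finset.prod_congr rfl h1, Finset.prod_congr rfl h2,
        Finset.prod_const, Finset.prod_const, Finset.card_sdiff_of_subset hA]
    rw [mul_inv, inv_pow, inv_pow]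
    ring
  · rw [if_neg hABeq]
    have hex : ∃ i₀ ∈ X, (1 + zz p A B i₀) = 0 := by
      have hne : ∃ i₀, (i₀ ∈ A ∧ i₀ ∉ B) ∨ (i₀ ∈ B ∧ i₀ ∉ A) := by
        by_contra hcon
        push_neg at hcon
        apply hABeq
        ext x
        have := hcon x
        tauto
      obtain ⟨i₀, hcase⟩ := hne
      refine ⟨i₀, ?_, ?_⟩
      · rcases hcase with ⟨h1, _⟩ | ⟨h1, _⟩
        · exact hA h1
        · exact hB h1
      · unfold zz uu
        rcases hcase with ⟨h1, h2⟩ | ⟨h1, h2⟩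
        · rw [if_pos h1, if_neg h2, one_add_div' _ _ (mul_ne_zero hpne hqne),
              show p * (1-p) + (1-p) * -p = 0 from by ring, zero_div]
        · rw [if_neg h2, if_pos h1, one_add_div' _ _ (mul_ne_zero hpne hqne),
              show p * (1-p) + -p * (1-p) = 0 from by ring, zero_div]
    obtain ⟨i₀, hi₀X, hi₀⟩ := hex
    exact Finset.prod_eq_zero hi₀X hi₀

theorem main (n t : ℕ) (G : Finset (Finset ℕ)) (hG : ∀ A ∈ G, A ⊆ Finset.Icc 1 n)
    (hpairs : ∀ A ∈ G, ∀ B ∈ G, t ≤ (A ∩ B).card) (p : ℝ) (hp : 0 < p)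
    (hpt : p ≤ 1 / (t + 1)) :
    mu p n G ≤ p ^ t := by
  set X := Finset.Icc 1 n with hXdef
  have hXcard : X.card = n := by simp [hXdef]
  rcases Nat.eq_zero_or_pos t with rfl | ht
  · -- trivial case t = 0
    have hp1 : p ≤ 1 := by
      have : (1:ℝ) / (0 + 1) = 1 := by norm_num
      simpa [this] using hpt
    have hle : mu p n G ≤ ∑ A ∈ X.powerset, p ^ A.card * (1-p) ^ (n - A.card) := by
      apply Finset.sum_le_sum_of_subset_of_nonneg
      · intro A hA
        exact Finset.mem_powerset.mpr (hG A hA)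
      · intro A _ _
        have h1 : (0:ℝ) ≤ p := le_of_lt hp
        have h2 : (0:ℝ) ≤ 1 - p := by linarith
        positivity
    have hsum1 : ∑ A ∈ X.powerset, p ^ A.card * (1-p) ^ (n - A.card) = 1 := by
      have h := Finset.prod_add (fun _ : ℕ => p) (fun _ : ℕ => 1 - p) X
      simp only [Finset.prod_const] at h
      have hL : (p + (1 - p))^X.card = 1 := by
        rw [show p + (1-p) = (1:ℝ) from by ring, one_pow]
      rw [hL] at h
      calc ∑ A ∈ X.powerset, p ^ A.card * (1-p) ^ (n - A.card)
          = ∑ A ∈ X.powerset, p ^ A.card * (1-p) ^ (X \ A).card := by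
            apply Finset.sum_congr rfl
            intro S hS
            rw [Finset.mem_powerset] at hS
            rw [Finset.card_sdiff_of_subset hS, hXcard]
        _ = 1 := h.symm
    rw [hsum1] at hle
    simpa using hle
  · -- main case
    have htR : (2:ℝ) ≤ (t:ℝ) + 1 := by
      have h2 : (2:ℕ) ≤ t + 1 := by omega
      exact_mod_cast h2
    have htpos : (0:ℝ) < (t:ℝ) + 1 := by linarith
    have hpt1 : p * ((t:ℝ) + 1) ≤ 1 := by
      rw [le_div_iff₀ htpos] at hpt
      linarith
    have hp1 : p < 1 := by nlinarith
    have hq : (0:ℝ) < 1 - p := by linarith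
    have hpne : p ≠ 0 := ne_of_gt hp
    have hqne : (1:ℝ) - p ≠ 0 := ne_of_gt hq
    have hptpow : p ^ t < 1 := pow_lt_one₀ (le_of_lt hp) hp1 (by omega)
    have h1pt : (0:ℝ) < 1 - p^t := by linarith
    have hptne : (1:ℝ) - p^t ≠ 0 := ne_of_gt h1pt
    -- notation
    set ν : Finset ℕ → ℝ := fun A => p ^ A.card * (1 - p) ^ (n - A.card) with hν
    have hν0 : ∀ A, 0 < ν A := by
      intro A
      have := hp; have := hq
      positivity
    set Fh : Finset ℕ → ℝ := fun S => ∑ A ∈ G, ν A * ∏ i ∈ S, uu p A i with hFh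
    set w : Finset ℕ → ℝ := fun S => ((p*(1-p))^S.card)⁻¹ * (Fh S)^2 with hw
    have hw0 : ∀ S, 0 ≤ w S := by
      intro S
      have hρ : (0:ℝ) < p * (1-p) := by positivity
      rw [hw]
      positivity
    have hzprod : ∀ (A B S : Finset ℕ),
        ∏ i ∈ S, zz p A B i
          = ((p*(1-p))^S.card)⁻¹ * ((∏ i ∈ S, uu p A i) * (∏ i ∈ S, uu p B i)) := by
      intro A B S
      unfold zz
      rw [Finset.prod_div_distrib, Finset.prod_const, Finset.prod_mul_distrib]
      rw [div_eq_inv_mul]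
    have hswap : ∀ c : ℕ → ℝ,
        ∑ S ∈ X.powerset, c S.card * w S
          = ∑ A ∈ G, ∑ B ∈ G, ν A * ν B *
              (∑ S ∈ X.powerset, c S.card * ∏ i ∈ S, zz p A B i) := by
      intro c
      have hper : ∀ S ∈ X.powerset, c S.card * w S
          = ∑ A ∈ G, ∑ B ∈ G, ν A * ν B * (c S.card * ∏ i ∈ S, zz p A B i) := by
        intro S _
        have hwS : w S = ((p*(1-p))^S.card)⁻¹ * (Fh S)^2 := rfl
        rw [hwS]
        have hsq : (Fh S)^2 = ∑ A ∈ G, ∑ B ∈ G,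
            (ν A * ∏ i ∈ S, uu p A i) * (ν B * ∏ i ∈ S, uu p B i) := by
          have hFhS : Fh S = ∑ A ∈ G, ν A * ∏ i ∈ S, uu p A i := rfl
          rw [sq, hFhS]
          exact Finset.sum_mul_sum _ _ _ _
        rw [hsq, Finset.mul_sum, Finset.mul_sum]
        apply Finset.sum_congr rfl
        intro A _
        rw [Finset.mul_sum, Finset.mul_sum]
        apply Finset.sum_congr rfl
        intro B _
        rw [hzprod A B S]
        ring
      rw [Finset.sum_congr rfl hper, Finset.sum_comm]
      apply Finset.sum_congr rfl
      intro A _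
      rw [Finset.sum_comm]
      apply Finset.sum_congr rfl
      intro B _
      rw [← Finset.mul_sum]
    -- key identities
    have key1 : ∑ S ∈ X.powerset, lam p t S.card * w S = 0 := by
      rw [hswap (fun s => lam p t s)]
      apply Finset.sum_eq_zero
      intro A hA
      apply Finset.sum_eq_zero
      intro B hB
      rw [support_kernel p hp hp1 t ht X A B (hG A hA) (hpairs A hA B hB), mul_zero]
    have key2 : ∑ S ∈ X.powerset, w S = mu p n G := by
      have h := hswap (fun _ => 1)
      simp only [one_mul] at h
      rw [h]
      have hdiag : ∀ A ∈ G, ∑ B ∈ G, ν A * ν B *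
          (∑ S ∈ X.powerset, ∏ i ∈ S, zz p A B i) = ν A := by
        intro A hA
        rw [Finset.sum_eq_single_of_mem A hA]
        · rw [diag_kernel p hp hp1 X A A (hG A hA) (hG A hA), if_pos rfl, hXcard]
          rw [show (p ^ A.card * (1 - p) ^ (n - A.card)) = ν A from rfl]
          exact mul_inv_cancel_right₀ (ne_of_gt (hν0 A)) (ν A)
        · intro B hB hBA
          rw [diag_kernel p hp hp1 X A B (hG A hA) (hG B hB), if_neg (fun hh => hBA hh.symm),
              mul_zero]
      rw [Finset.sum_congr rfl hdiag]
      rfl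
    have key3 : Fh ∅ = mu p n G := by
      have : Fh ∅ = ∑ A ∈ G, ν A * ∏ i ∈ (∅:Finset ℕ), uu p A i := rfl
      rw [this]
      simp only [Finset.prod_empty, mul_one]
      rfl
    have hmemE : (∅ : Finset ℕ) ∈ X.powerset := Finset.mem_powerset.mpr (Finset.empty_subset X)
    have hwE : w ∅ = (mu p n G)^2 := by
      have h0 : w ∅ = ((p*(1-p))^((∅:Finset ℕ).card))⁻¹ * (Fh ∅)^2 := rfl
      rw [h0, Finset.card_empty, pow_zero, inv_one, one_mul, key3]
    have hsplit1 : ∑ S ∈ X.powerset.erase ∅, lam p t S.card * w S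
        + lam p t ((∅:Finset ℕ).card) * w ∅ = 0 := by
      rw [Finset.sum_erase_add _ _ hmemE]
      exact key1
    have hsplit2 : ∑ S ∈ X.powerset.erase ∅, w S + w ∅ = mu p n G := by
      rw [Finset.sum_erase_add _ _ hmemE]
      exact key2
    have hl0 : lam p t ((∅:Finset ℕ).card) = 1 := by
      rw [Finset.card_empty]
      exact lam_zero p t ht hptne
    set μ := mu p n G with hμdef
    have hμ0 : 0 ≤ μ := by
      have h0 : 0 ≤ ∑ A ∈ G, ν A := Finset.sum_nonneg (fun A _ => le_of_lt (hν0 A))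
      exact h0
    have hbound : ∀ S ∈ X.powerset.erase ∅,
        -(p^t/(1-p^t)) * w S ≤ lam p t S.card * w S := by
      intro S hS
      have hSne : S ≠ ∅ := (Finset.mem_erase.mp hS).1
      have hS1 : 1 ≤ S.card := Finset.card_pos.mpr (Finset.nonempty_iff_ne_empty.mpr hSne)
      exact mul_le_mul_of_nonneg_right (lam_lower p t S.card ht hS1 hp hpt1) (hw0 S)
    have hErest : ∑ S ∈ X.powerset.erase ∅, w S = μ - μ^2 := by
      rw [hwE] at hsplit2
      linarith
    have hsum_ge : -(p^t/(1-p^t)) * (μ - μ^2)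
        ≤ ∑ S ∈ X.powerset.erase ∅, lam p t S.card * w S := by
      calc -(p^t/(1-p^t)) * (μ - μ^2)
          = ∑ S ∈ X.powerset.erase ∅, -(p^t/(1-p^t)) * w S := by
            rw [← Finset.mul_sum, hErest]
        _ ≤ _ := Finset.sum_le_sum hbound
    have hrest : ∑ S ∈ X.powerset.erase ∅, lam p t S.card * w S = -(μ^2) := by
      rw [hwE, hl0] at hsplit1
      linarith
    have hquad : μ^2 - (p^t/(1-p^t)) * (μ - μ^2) ≤ 0 := by
      rw [hrest] at hsum_ge
      linarith
    have hls : (1 - p^t) * (p^t/(1-p^t)) * (μ - μ^2) = p^t * (μ - μ^2) := by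
      rw [mul_div_cancel₀ _ hptne]
    have hstep := mul_le_mul_of_nonneg_left hquad (le_of_lt h1pt)
    have hmu2 : μ^2 ≤ p^t * μ := by nlinarith [hstep, hls]
    rcases eq_or_lt_of_le hμ0 with heq | hpos
    · rw [← heq]
      positivity
    · have hmm : μ * μ ≤ p^t * μ := by nlinarith [hmu2]
      exact le_of_mul_le_mul_right hmm hpos

end FFFLO

theorem stmt_12 (n t : ℕ) (G : Finset (Finset ℕ)) (hG : ∀ A ∈ G, A ⊆ Finset.Icc 1 n)
    (hint : RWise 2 t G) (p : ℝ) (hp : 0 < p) (hpt : p ≤ 1 / (t + 1)) :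
    mu p n G ≤ p ^ t := by
  have hpairs : ∀ A ∈ G, ∀ B ∈ G, t ≤ (A ∩ B).card := by
    intro A hA B hB
    have h := hint ![A, B] (by intro k; fin_cases k <;> simpa)
    have he : (⋂ k, ((![A, B] k : Finset ℕ) : Set ℕ)) = ((A ∩ B : Finset ℕ) : Set ℕ) := by
      ext x
      simp only [Set.mem_iInter, Finset.coe_inter, Set.mem_inter_iff, Finset.mem_coe]
      constructor
      · intro hh
        have h0 := hh 0
        have h1 := hh 1
        simp only [Matrix.cons_val_zero, Matrix.cons_val_one, Matrix.head_cons,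
          Finset.mem_coe] at h0 h1
        exact ⟨h0, h1⟩
      · rintro ⟨h0, h1⟩ k
        fin_cases k
        · simpa using h0
        · simpa using h1
    rw [he, Set.ncard_coe_finset] at h
    exact h
  exact FFFLO.main n t G hG hpairs p hp hpt
end

section
/- Let H ⊆ 2^{[n]} be a shifted 3-wise t-intersecting family with H ⊄ F_0^t. Let s be maximal such that H is 2-wise s-intersecting, and let h = min{i : |H ∩ [t+i]| ≥ t for all H ∈ H}. Then 1 ≤ h ≤ s − t. -/
open Finset

section AuxStmt13

/-- Membership in a shifted family is preserved by replacing `j ∈ B` with `i < j`, `i ∉ B`. -/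
private lemma mem_of_shifted_swap (n : ℕ) (H : Finset (Finset ℕ)) (hsh : ∀ i j : ℕ, 1 ≤ i → i < j → j ≤ n → (H.image (fun A => if A ∩ {i, j} = {j} ∧ (A.erase j ∪ {i}) ∉ H then A.erase j ∪ {i} else A)) = H)
    {B : Finset ℕ} (hB : B ∈ H) {i j : ℕ} (h1 : 1 ≤ i) (hij : i < j) (hjn : j ≤ n)
    (hjB : j ∈ B) (hiB : i ∉ B) : B.erase j ∪ {i} ∈ H := by
  by_cases hmem : B.erase j ∪ {i} ∈ H
  · exact hmem
  · have hcond : B ∩ ({i, j} : Finset ℕ) = {j} := by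
      ext x
      simp only [Finset.mem_inter, Finset.mem_insert, Finset.mem_singleton]
      constructor
      · rintro ⟨hx, rfl | rfl⟩
        · exact absurd hx hiB
        · rfl
      · rintro rfl; exact ⟨hjB, Or.inr rfl⟩
    have h2 : (if B ∩ ({i, j} : Finset ℕ) = {j} ∧ (B.erase j ∪ {i}) ∉ H then B.erase j ∪ {i} else B) = B.erase j ∪ {i} := by
      rw [if_pos ⟨hcond, hmem⟩]
    have h3 : B.erase j ∪ {i} ∈ H := by
      rw [← hsh i j h1 hij hjn]
      exact h2 ▸ Finset.mem_image_of_mem _ hB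
    exact absurd h3 hmem

end AuxStmt13

private lemma shifted_swap (n : ℕ) (H : Finset (Finset ℕ)) (hsh : Shifted n H)
    {B : Finset ℕ} (hB : B ∈ H) {i j : ℕ} (h1 : 1 ≤ i) (hij : i < j) (hjn : j ≤ n)
    (hjB : j ∈ B) (hiB : i ∉ B) : B.erase j ∪ {i} ∈ H :=
  mem_of_shifted_swap n H (fun i j a b c => hsh i j a b c) hB h1 hij hjn hjB hiB

/-- Descent: from any pair, find a pair whose intersection lies in `[c]`. -/
private lemma descent (n c : ℕ) (H : Finset (Finset ℕ)) (hH : ∀ A ∈ H, A ⊆ Finset.Icc 1 n)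
    (hsh : Shifted n H) :
    ∀ m : ℕ, ∀ B ∈ H, ∀ C ∈ H, (B ∩ C).card ≤ c → (B ∩ C).sum id ≤ m →
      ∃ B' ∈ H, ∃ C' ∈ H, B' ∩ C' ⊆ Finset.Icc 1 c := by
  intro m
  induction m with
  | zero =>
    intro B hB C hC hcard hsum
    refine ⟨B, hB, C, hC, ?_⟩
    intro x hx
    have hx1 : 1 ≤ x := by
      have := hH B hB (Finset.mem_inter.1 hx).1
      exact (Finset.mem_Icc.1 this).1
    have h2 := Finset.single_le_sum (f := id) (fun (a : ℕ) _ => Nat.zero_le (id a)) hx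
    simp only [id_eq] at h2
    have h3 : (∑ z ∈ B ∩ C, z) ≤ 0 := hsum
    omega
  | succ m ih =>
    intro B hB C hC hcard hsum
    replace hsum : (∑ z ∈ B ∩ C, z) ≤ m + 1 := hsum
    by_cases hsub : B ∩ C ⊆ Finset.Icc 1 c
    · exact ⟨B, hB, C, hC, hsub⟩
    · obtain ⟨x, hx, hxI⟩ := Finset.not_subset.1 hsub
      have hx1 : 1 ≤ x := (Finset.mem_Icc.1 (hH B hB (Finset.mem_inter.1 hx).1)).1
      have hxc : c < x := by
        rcases Nat.lt_or_ge c x with h' | h'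
        · exact h'
        · exact absurd (Finset.mem_Icc.2 ⟨hx1, h'⟩) hxI
      -- find y ∈ Icc 1 c, y ∉ B ∩ C
      have hy : ∃ y ∈ Finset.Icc 1 c, y ∉ B ∩ C := by
        by_contra hcon
        push_neg at hcon
        have hsub2 : insert x (Finset.Icc 1 c) ⊆ B ∩ C := by
          intro z hz
          rcases Finset.mem_insert.1 hz with rfl | hz
          · exact hx
          · exact hcon z hz
        have h1 : (insert x (Finset.Icc 1 c)).card = c + 1 := by
          rw [Finset.card_insert_of_notMem hxI, Nat.card_Icc]; omega
        have := Finset.card_le_card hsub2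
        omega
      obtain ⟨y, hyI, hyBC⟩ := hy
      have hy1 : 1 ≤ y := (Finset.mem_Icc.1 hyI).1
      have hyx : y < x := lt_of_le_of_lt (Finset.mem_Icc.1 hyI).2 hxc
      have hxn : x ≤ n := (Finset.mem_Icc.1 (hH B hB (Finset.mem_inter.1 hx).1)).2
      have hxB : x ∈ B := (Finset.mem_inter.1 hx).1
      have hxC : x ∈ C := (Finset.mem_inter.1 hx).2
      have hxsum : x ≤ ∑ z ∈ B ∩ C, z := by
        have h2 := Finset.single_le_sum (f := id) (fun (a : ℕ) _ => Nat.zero_le (id a)) hx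
        simpa only [id_eq] using h2
      have key : ∀ D E : Finset ℕ, D ∈ H → E ∈ H → ((D.erase x ∪ {y}) ∩ E) ⊆ insert y ((D ∩ E).erase x) := by
        intro D E _ _ z hz
        rcases Finset.mem_inter.1 hz with ⟨hz1, hz2⟩
        rcases Finset.mem_union.1 hz1 with hz1 | hz1
        · rcases Finset.mem_erase.1 hz1 with ⟨hzx, hzD⟩
          exact Finset.mem_insert.2 (Or.inr (Finset.mem_erase.2 ⟨hzx, Finset.mem_inter.2 ⟨hzD, hz2⟩⟩))
        · exact Finset.mem_insert.2 (Or.inl (Finset.mem_singleton.1 hz1))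
      have hcard_erase : ((B ∩ C).erase x).card = (B ∩ C).card - 1 :=
        Finset.card_erase_of_mem hx
      have hsum_erase : (∑ z ∈ (B ∩ C).erase x, z) = (∑ z ∈ B ∩ C, z) - x := by
        have h2 := Finset.sum_erase_add (B ∩ C) id hx
        simp only [id_eq] at h2
        omega
      have hcard_ins : (insert y ((B ∩ C).erase x)).card ≤ (B ∩ C).card := by
        have := Finset.card_insert_le y ((B ∩ C).erase x)
        have h1 : 1 ≤ (B ∩ C).card := Finset.card_pos.2 ⟨x, hx⟩
        omega
      have hsum_ins : (∑ z ∈ insert y ((B ∩ C).erase x), z) ≤ (∑ z ∈ B ∩ C, z) - x + y := by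
        by_cases hy' : y ∈ (B ∩ C).erase x
        · rw [Finset.insert_eq_self.2 hy']; omega
        · rw [Finset.sum_insert hy']
          omega
      by_cases hyB : y ∈ B
      · -- then y ∉ C; shift C
        have hyC : y ∉ C := fun hyC => hyBC (Finset.mem_inter.2 ⟨hyB, hyC⟩)
        have hC' : C.erase x ∪ {y} ∈ H := shifted_swap n H hsh hC hy1 hyx hxn hxC hyC
        have hsub' : B ∩ (C.erase x ∪ {y}) ⊆ insert y ((B ∩ C).erase x) := by
          intro z hz
          have : ((C.erase x ∪ {y}) ∩ B) ⊆ insert y ((C ∩ B).erase x) := key C B hC hB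
          rw [Finset.inter_comm] at hz
          have := this hz
          rwa [Finset.inter_comm C B] at this
        refine ih B hB (C.erase x ∪ {y}) hC' ?_ ?_
        · exact le_trans (Finset.card_le_card hsub') hcard_ins |>.trans hcard
        · have h1 := Finset.sum_le_sum_of_subset (f := id) hsub'
          simp only [id_eq] at h1
          have h2 : (∑ z ∈ B ∩ (C.erase x ∪ {y}), z) ≤ m := by omega
          exact h2
      · have hB' : B.erase x ∪ {y} ∈ H := shifted_swap n H hsh hB hy1 hyx hxn hxB hyB
        have hsub' : (B.erase x ∪ {y}) ∩ C ⊆ insert y ((B ∩ C).erase x) := key B C hB hC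
        refine ih (B.erase x ∪ {y}) hB' C hC ?_ ?_
        · exact le_trans (Finset.card_le_card hsub') hcard_ins |>.trans hcard
        · have h1 := Finset.sum_le_sum_of_subset (f := id) hsub'
          simp only [id_eq] at h1
          have h2 : (∑ z ∈ (B.erase x ∪ {y}) ∩ C, z) ≤ m := by omega
          exact h2

theorem stmt_13 (n t s h : ℕ) (H : Finset (Finset ℕ)) (hH : ∀ A ∈ H, A ⊆ Finset.Icc 1 n)
    (hshift : Shifted n H) (hint : RWise 3 t H) (hnot : ¬ H ⊆ F0 n t)
    (hs : RWise 2 s H) (hs' : ¬ RWise 2 (s + 1) H)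
    (hh : ∀ A ∈ H, t ≤ (A ∩ Finset.Icc 1 (t + h)).card)
    (hh' : ∀ i < h, ∃ A ∈ H, (A ∩ Finset.Icc 1 (t + i)).card < t) :
    1 ≤ h ∧ h ≤ s - t := by
  have hpos : 1 ≤ h := by
    by_contra hcon
    have h0 : h = 0 := by omega
    apply hnot
    intro A hA
    have ht : t ≤ (A ∩ Finset.Icc 1 t).card := by
      have := hh A hA; rwa [h0, Nat.add_zero] at this
    have heq : A ∩ Finset.Icc 1 t = Finset.Icc 1 t := by
      apply Finset.eq_of_subset_of_card_le Finset.inter_subset_right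
      rwa [Nat.card_Icc, Nat.add_sub_cancel]
    have hsub : Finset.Icc 1 t ⊆ A := heq ▸ Finset.inter_subset_left
    simp only [F0, Finset.mem_filter, Finset.mem_powerset]
    exact ⟨hH A hA, hsub⟩
  refine ⟨hpos, ?_⟩
  have hts : t + h ≤ s := by
    by_contra hcon
    have hsle : s ≤ t + h - 1 := by omega
    -- get pair with small intersection
    rw [RWise] at hs'
    push_neg at hs'
    obtain ⟨f, hf, hflt⟩ := hs'
    have hIeq : (⋂ k, ((f k : Finset ℕ) : Set ℕ)) = ↑(f 0 ∩ f 1) := by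
      ext x; simp [Fin.forall_fin_two]
    rw [hIeq, Set.ncard_coe_finset] at hflt
    have hcard : (f 0 ∩ f 1).card ≤ t + h - 1 := by omega
    obtain ⟨B, hB, C, hC, hBC⟩ := descent n (t + h - 1) H hH hshift ((f 0 ∩ f 1).sum id)
      (f 0) (hf 0) (f 1) (hf 1) hcard le_rfl
    -- get A with small initial intersection
    obtain ⟨A, hA, hAlt⟩ := hh' (h - 1) (by omega)
    have hth : t + (h - 1) = t + h - 1 := by omega
    rw [hth] at hAlt
    -- 3-wise intersecting
    have h3 := hint ![A, B, C] (by
      intro k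
      fin_cases k <;> simpa)
    have hIeq3 : (⋂ k, ((![A, B, C] k : Finset ℕ) : Set ℕ)) = ↑(A ∩ B ∩ C) := by
      ext x; simp [Fin.forall_fin_succ, and_assoc]
    rw [hIeq3, Set.ncard_coe_finset] at h3
    have hsub3 : A ∩ B ∩ C ⊆ A ∩ Finset.Icc 1 (t + h - 1) := by
      intro z hz
      rcases Finset.mem_inter.1 hz with ⟨hz1, hz2⟩
      rcases Finset.mem_inter.1 hz1 with ⟨hzA, hzB⟩
      exact Finset.mem_inter.2 ⟨hzA, hBC (Finset.mem_inter.2 ⟨hzB, hz2⟩)⟩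
    have := Finset.card_le_card hsub3
    omega
  omega
end
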